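/- arXiv:2510.20094 — 6 statements merged into one kernel-verified Lean document; each statement's English description precedes it below -/
import Mathlib

section
/- Assume sup_{ℓ≥1} ℓ|a_ℓ| < ∞. Then there exists C > 0 (depending only on the sequence a) such that for every κ > 0 and every x ∈ ℓ²_w the following hold: for each ℓ ≥ 1 the series defining F_ℓ(x,κ) := ℓ(2 − κ a_ℓ) x_ℓ − κ ∑_{j=1}^{ℓ−1} j a_j x_j x_{ℓ−j} − κ ∑_{j=ℓ+1}^{∞} (j a_j − (j−ℓ) a_{j−ℓ}) x_j x_{j−ℓ} converges absolutely, the sequence (F_ℓ(x,κ))_{ℓ≥1} is square-summable, and (∑_{ℓ≥1} F_ℓ(x,κ)²)^{1/2} ≤ C (1+κ) (‖x‖_w + ‖x‖_w²). In particular F(·,κ) is a well-defined map from ℓ²_w to ℓ². -/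
/-!
If `ℓ |a_ℓ| ≤ A`, every product in the convolution sum and in the tail series of `F_ℓ` has a
factor carrying the weight `ℓ`; since `ℓ |x_ℓ| ≤ ‖x‖_w`, both sums are at most
`2 A ‖x‖_w ‖x‖_{ℓ¹} / ℓ`. By Cauchy–Schwarz against `1 / ℓ`,
`‖x‖_{ℓ¹} ≤ (∑ 1/ℓ²)^{1/2} ‖x‖_w`. Hence
`|F_ℓ| ≤ (2 + κA) ℓ |x_ℓ| + 4 κ A ‖x‖_w ‖x‖_{ℓ¹} / ℓ`,
and Minkowski's inequality in `ℓ²` turns this into the bound.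
-/

open scoped BigOperators
open Filter Topology Real

noncomputable section

/-- `x` solves the stationary Fourier system at intensity `κ` for coefficients `a`:
for every `ℓ ≥ 1` the tail series converges absolutely (equivalently, is `Summable` in `ℝ`) and
`ℓ(2 − κ a_ℓ) x_ℓ = κ ∑_{j=1}^{ℓ−1} j a_j x_j x_{ℓ−j}
  + κ ∑_{j=ℓ+1}^∞ (j a_j − (j−ℓ) a_{j−ℓ}) x_j x_{j−ℓ}`,
where the infinite sum is indexed by `j = ℓ + k + 1`, `k : ℕ`. -/
def SolvesMV (a : ℕ → ℝ) (κ : ℝ) (x : ℕ → ℝ) : Prop :=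
  ∀ ℓ : ℕ, 1 ≤ ℓ →
    Summable (fun k : ℕ =>
      (((ℓ + k + 1 : ℕ) : ℝ) * a (ℓ + k + 1) - ((k + 1 : ℕ) : ℝ) * a (k + 1))
        * x (ℓ + k + 1) * x (k + 1)) ∧
    (ℓ : ℝ) * (2 - κ * a ℓ) * x ℓ
      = κ * ∑ j ∈ Finset.Ico 1 ℓ, (j : ℝ) * a j * x j * x (ℓ - j)
        + κ * ∑' k : ℕ,
            (((ℓ + k + 1 : ℕ) : ℝ) * a (ℓ + k + 1) - ((k + 1 : ℕ) : ℝ) * a (k + 1))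
              * x (ℓ + k + 1) * x (k + 1)

/-- The squared weighted norm `∑_{ℓ≥1} (1+ℓ²) x_ℓ²`. -/
def wnormSq (x : ℕ → ℝ) : ℝ := ∑' ℓ : ℕ, (1 + ((ℓ + 1 : ℕ) : ℝ) ^ 2) * x (ℓ + 1) ^ 2

/-- The weighted norm `‖x‖_w = (∑_{ℓ≥1} (1+ℓ²) x_ℓ²)^{1/2}`. -/
def wnorm (x : ℕ → ℝ) : ℝ := Real.sqrt (wnormSq x)

/-- Membership in the weighted space `ℓ²_w`. -/
def MemL2w (x : ℕ → ℝ) : Prop :=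
  Summable fun ℓ : ℕ => (1 + ((ℓ + 1 : ℕ) : ℝ) ^ 2) * x (ℓ + 1) ^ 2

/-- The map `F_ℓ(x,κ)`. -/
def Fmap (a : ℕ → ℝ) (κ : ℝ) (x : ℕ → ℝ) (ℓ : ℕ) : ℝ :=
  (ℓ : ℝ) * (2 - κ * a ℓ) * x ℓ
    - κ * ∑ j ∈ Finset.Ico 1 ℓ, (j : ℝ) * a j * x j * x (ℓ - j)
    - κ * ∑' k : ℕ,
        (((ℓ + k + 1 : ℕ) : ℝ) * a (ℓ + k + 1) - ((k + 1 : ℕ) : ℝ) * a (k + 1))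
          * x (ℓ + k + 1) * x (k + 1)

open Finset

section SquareSummable

variable {ι : Type*} {f g : ι → ℝ}

theorem summable_mul_and_tsum_mul_le_sqrt_mul_sqrt (hf : ∀ i, 0 ≤ f i) (hg : ∀ i, 0 ≤ g i)
    (hf_sum : Summable fun i => f i ^ 2) (hg_sum : Summable fun i => g i ^ 2) :
    (Summable fun i => f i * g i) ∧ ∑' i, f i * g i ≤ √(∑' i, f i ^ 2) * √(∑' i, g i ^ 2) := by
  simpa only [Real.rpow_two, Real.sqrt_eq_rpow] using
    Real.summable_and_inner_le_Lp_mul_Lq_tsum_of_nonneg .two_two hf hg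
      (by simpa only [Real.rpow_two] using hf_sum) (by simpa only [Real.rpow_two] using hg_sum)

theorem sqrt_tsum_const_mul_sq {c : ℝ} (hc : 0 ≤ c) (f : ι → ℝ) :
    √(∑' i, (c * f i) ^ 2) = c * √(∑' i, f i ^ 2) := by
  simp_rw [mul_pow, tsum_mul_left]
  rw [Real.sqrt_mul (sq_nonneg c), Real.sqrt_sq hc]

theorem summable_sq_and_sqrt_tsum_sq_le_of_abs_le {F : ι → ℝ} {c d : ℝ} (hc : 0 ≤ c) (hd : 0 ≤ d)
    (hf : ∀ i, 0 ≤ f i) (hg : ∀ i, 0 ≤ g i)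
    (hf_sum : Summable fun i => f i ^ 2) (hg_sum : Summable fun i => g i ^ 2)
    (hF : ∀ i, |F i| ≤ c * f i + d * g i) :
    (Summable fun i => F i ^ 2) ∧
      √(∑' i, F i ^ 2) ≤ c * √(∑' i, f i ^ 2) + d * √(∑' i, g i ^ 2) := by
  have hcf : Summable fun i => (c * f i) ^ 2 := by simpa only [mul_pow] using hf_sum.mul_left _
  have hdg : Summable fun i => (d * g i) ^ 2 := by simpa only [mul_pow] using hg_sum.mul_left _
  obtain ⟨hsum, hle⟩ := Real.Lp_add_le_tsum_of_nonneg one_le_two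
    (fun i => mul_nonneg hc (hf i)) (fun i => mul_nonneg hd (hg i))
    (by simpa only [Real.rpow_two] using hcf) (by simpa only [Real.rpow_two] using hdg)
  simp only [Real.rpow_two, ← Real.sqrt_eq_rpow, sqrt_tsum_const_mul_sq hc,
    sqrt_tsum_const_mul_sq hd] at hsum hle
  have hFsq : ∀ i, F i ^ 2 ≤ (c * f i + d * g i) ^ 2 := fun i => by
    rw [← sq_abs]; exact pow_le_pow_left₀ (abs_nonneg _) (hF i) 2
  have hFsum : Summable fun i => F i ^ 2 := hsum.of_nonneg_of_le (fun i => sq_nonneg _) hFsq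
  exact ⟨hFsum, (Real.sqrt_le_sqrt (hFsum.tsum_le_tsum hFsq hsum)).trans hle⟩

end SquareSummable

theorem summable_one_div_natCast_succ_sq :
    Summable fun k : ℕ => (1 / ((k + 1 : ℕ) : ℝ)) ^ 2 := by
  simpa only [one_div_pow] using
    (summable_nat_add_iff 1).mpr (Real.summable_one_div_nat_pow.mpr one_lt_two)

def InvNatBound (y : ℕ → ℝ) (B : ℝ) : Prop :=
  ∀ m : ℕ, 1 ≤ m → (m : ℝ) * |y m| ≤ B

theorem InvNatBound.nonneg {y : ℕ → ℝ} {B : ℝ} (h : InvNatBound y B) : 0 ≤ B :=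
  (mul_nonneg (Nat.cast_nonneg 1) (abs_nonneg _)).trans (h 1 le_rfl)

theorem InvNatBound.abs_le {y : ℕ → ℝ} {B : ℝ} (h : InvNatBound y B) {m : ℕ} (hm : 1 ≤ m) :
    |y m| ≤ B :=
  (le_mul_of_one_le_left (abs_nonneg _) (by exact_mod_cast hm)).trans (h m hm)

theorem mul_abs_sq_le_one_add_sq_mul_sq (n y : ℝ) : (n * |y|) ^ 2 ≤ (1 + n ^ 2) * y ^ 2 := by
  rw [mul_pow, sq_abs]
  nlinarith [sq_nonneg y]

namespace MemL2w

variable {x : ℕ → ℝ}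

theorem summable_natCast_mul_abs_sq (hx : MemL2w x) :
    Summable fun ℓ : ℕ => (((ℓ + 1 : ℕ) : ℝ) * |x (ℓ + 1)|) ^ 2 :=
  hx.of_nonneg_of_le (fun _ => sq_nonneg _) fun _ => mul_abs_sq_le_one_add_sq_mul_sq _ _

theorem sqrt_tsum_natCast_mul_abs_sq_le_wnorm (hx : MemL2w x) :
    √(∑' ℓ : ℕ, (((ℓ + 1 : ℕ) : ℝ) * |x (ℓ + 1)|) ^ 2) ≤ wnorm x :=
  Real.sqrt_le_sqrt <| hx.summable_natCast_mul_abs_sq.tsum_le_tsum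
    (fun _ => mul_abs_sq_le_one_add_sq_mul_sq _ _) hx

theorem invNatBound_wnorm (hx : MemL2w x) : InvNatBound x (wnorm x) := by
  intro m hm
  obtain ⟨ℓ, rfl⟩ := Nat.exists_eq_add_of_le' hm
  calc ((ℓ + 1 : ℕ) : ℝ) * |x (ℓ + 1)|
      ≤ √(∑' ℓ : ℕ, (((ℓ + 1 : ℕ) : ℝ) * |x (ℓ + 1)|) ^ 2) :=
        (le_abs_self _).trans (Real.abs_le_sqrt
          (hx.summable_natCast_mul_abs_sq.le_tsum ℓ fun _ _ => sq_nonneg _))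
    _ ≤ wnorm x := hx.sqrt_tsum_natCast_mul_abs_sq_le_wnorm

theorem summable_abs_and_tsum_abs_le (hx : MemL2w x) :
    (Summable fun k : ℕ => |x (k + 1)|) ∧
      ∑' k : ℕ, |x (k + 1)| ≤ √(∑' k : ℕ, (1 / ((k + 1 : ℕ) : ℝ)) ^ 2) * wnorm x := by
  have hsplit : ∀ k : ℕ, |x (k + 1)| = 1 / ((k + 1 : ℕ) : ℝ) * (((k + 1 : ℕ) : ℝ) * |x (k + 1)|) :=
    fun k => by field_simp
  obtain ⟨hsum, hle⟩ := summable_mul_and_tsum_mul_le_sqrt_mul_sqrt (fun k => by positivity)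
    (fun k => by positivity) summable_one_div_natCast_succ_sq hx.summable_natCast_mul_abs_sq
  simp only [← hsplit] at hsum hle
  exact ⟨hsum, hle.trans (by gcongr; exact hx.sqrt_tsum_natCast_mul_abs_sq_le_wnorm)⟩

end MemL2w

def tailTerm (a x : ℕ → ℝ) (ℓ k : ℕ) : ℝ :=
  (((ℓ + k + 1 : ℕ) : ℝ) * a (ℓ + k + 1) - ((k + 1 : ℕ) : ℝ) * a (k + 1))
    * x (ℓ + k + 1) * x (k + 1)

theorem sum_Ico_abs_le_tsum {x : ℕ → ℝ} (hx₁ : Summable fun k : ℕ => |x (k + 1)|) (ℓ : ℕ) :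
    ∑ j ∈ Ico 1 ℓ, |x j| ≤ ∑' k : ℕ, |x (k + 1)| := by
  rw [sum_Ico_eq_sum_range]
  simp_rw [add_comm 1]
  exact hx₁.sum_le_tsum _ fun _ _ => abs_nonneg _

section Estimates

variable {a x : ℕ → ℝ} {A N : ℝ}

theorem abs_tailTerm_le (ha : InvNatBound a A) (hx : InvNatBound x N) {ℓ : ℕ} (hℓ : 1 ≤ ℓ)
    (k : ℕ) : |tailTerm a x ℓ k| ≤ 2 * A * N / ℓ * |x (k + 1)| := by
  have hℓ0 : (0 : ℝ) < ℓ := by exact_mod_cast hℓ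
  have hA := ha.nonneg
  have hcoef : |((ℓ + k + 1 : ℕ) : ℝ) * a (ℓ + k + 1) - ((k + 1 : ℕ) : ℝ) * a (k + 1)|
      ≤ 2 * A := by
    refine (abs_sub _ _).trans ?_
    rw [abs_mul, abs_mul, Nat.abs_cast, Nat.abs_cast, two_mul]
    exact add_le_add (ha _ (by omega)) (ha _ (by omega))
  have hxℓ : |x (ℓ + k + 1)| ≤ N / ℓ := by
    rw [le_div_iff₀' hℓ0]
    refine le_trans ?_ (hx (ℓ + k + 1) (by omega))
    gcongr
    omega
  rw [tailTerm, abs_mul, abs_mul, mul_div_assoc]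
  gcongr

theorem summable_abs_tailTerm (ha : InvNatBound a A) (hx : InvNatBound x N)
    (hx₁ : Summable fun k : ℕ => |x (k + 1)|) {ℓ : ℕ} (hℓ : 1 ≤ ℓ) :
    Summable fun k => |tailTerm a x ℓ k| :=
  hx₁.mul_left _ |>.of_nonneg_of_le (fun _ => abs_nonneg _) (abs_tailTerm_le ha hx hℓ)

theorem abs_tsum_tailTerm_le (ha : InvNatBound a A) (hx : InvNatBound x N)
    (hx₁ : Summable fun k : ℕ => |x (k + 1)|) {ℓ : ℕ} (hℓ : 1 ≤ ℓ) :
    |∑' k, tailTerm a x ℓ k| ≤ 2 * A * N * (∑' k : ℕ, |x (k + 1)|) / ℓ := by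
  have hsum := summable_abs_tailTerm ha hx hx₁ hℓ
  calc |∑' k, tailTerm a x ℓ k| ≤ ∑' k, |tailTerm a x ℓ k| := by
        simpa only [Real.norm_eq_abs] using norm_tsum_le_tsum_norm (f := tailTerm a x ℓ) hsum
    _ ≤ ∑' k : ℕ, 2 * A * N / ℓ * |x (k + 1)| :=
        hsum.tsum_le_tsum (abs_tailTerm_le ha hx hℓ) (hx₁.mul_left _)
    _ = 2 * A * N * (∑' k : ℕ, |x (k + 1)|) / ℓ := by rw [tsum_mul_left]; ring

theorem abs_sum_convolution_le (ha : InvNatBound a A) (hx : InvNatBound x N)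
    (hx₁ : Summable fun k : ℕ => |x (k + 1)|) {ℓ : ℕ} (hℓ : 1 ≤ ℓ) :
    |∑ j ∈ Ico 1 ℓ, (j : ℝ) * a j * x j * x (ℓ - j)|
      ≤ 2 * A * N * (∑' k : ℕ, |x (k + 1)|) / ℓ := by
  have hℓ0 : (0 : ℝ) < ℓ := by exact_mod_cast hℓ
  have hA := ha.nonneg
  have hN := hx.nonneg
  -- `ℓ = j + (ℓ - j)`, and each of the two weights is absorbed by one factor of `x`
  have hterm : ∀ j ∈ Ico 1 ℓ,
      ℓ * |(j : ℝ) * a j * x j * x (ℓ - j)| ≤ A * N * (|x (ℓ - j)| + |x j|) := by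
    intro j hj
    rw [mem_Ico] at hj
    have hxx : (ℓ : ℝ) * (|x j| * |x (ℓ - j)|) ≤ N * (|x (ℓ - j)| + |x j|) :=
      calc (ℓ : ℝ) * (|x j| * |x (ℓ - j)|)
          = j * |x j| * |x (ℓ - j)| + |x j| * (((ℓ - j : ℕ) : ℝ) * |x (ℓ - j)|) := by
            rw [Nat.cast_sub hj.2.le]; ring
        _ ≤ N * |x (ℓ - j)| + |x j| * N := by
            gcongr
            exacts [hx j hj.1, hx _ (by omega)]
        _ = N * (|x (ℓ - j)| + |x j|) := by ring
    calc (ℓ : ℝ) * |(j : ℝ) * a j * x j * x (ℓ - j)|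
        = (j * |a j|) * ((ℓ : ℝ) * (|x j| * |x (ℓ - j)|)) := by
          rw [abs_mul, abs_mul, abs_mul, Nat.abs_cast]; ring
      _ ≤ A * (N * (|x (ℓ - j)| + |x j|)) := by
          gcongr
          exact ha j hj.1
      _ = A * N * (|x (ℓ - j)| + |x j|) := by ring
  have hreflect : ∑ j ∈ Ico 1 ℓ, |x (ℓ - j)| = ∑ j ∈ Ico 1 ℓ, |x j| := by
    rw [sum_Ico_reflect (fun j => |x j|) 1 (by omega : ℓ ≤ ℓ + 1), Nat.add_sub_cancel_left,
      Nat.add_sub_cancel]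
  rw [le_div_iff₀' hℓ0]
  calc (ℓ : ℝ) * |∑ j ∈ Ico 1 ℓ, (j : ℝ) * a j * x j * x (ℓ - j)|
      ≤ ∑ j ∈ Ico 1 ℓ, ℓ * |(j : ℝ) * a j * x j * x (ℓ - j)| := by
        rw [← mul_sum]
        gcongr
        exact abs_sum_le_sum_abs _ _
    _ ≤ ∑ j ∈ Ico 1 ℓ, A * N * (|x (ℓ - j)| + |x j|) := sum_le_sum hterm
    _ = A * N * (2 * ∑ j ∈ Ico 1 ℓ, |x j|) := by rw [← mul_sum, sum_add_distrib, hreflect]; ring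
    _ ≤ A * N * (2 * ∑' k : ℕ, |x (k + 1)|) := by
        gcongr
        exact sum_Ico_abs_le_tsum hx₁ ℓ
    _ = 2 * A * N * ∑' k : ℕ, |x (k + 1)| := by ring

theorem abs_Fmap_le (ha : InvNatBound a A) (hx : InvNatBound x N)
    (hx₁ : Summable fun k : ℕ => |x (k + 1)|) {κ : ℝ} (hκ : 0 ≤ κ) {ℓ : ℕ} (hℓ : 1 ≤ ℓ) :
    |Fmap a κ x ℓ| ≤ (2 + κ * A) * (ℓ * |x ℓ|) + 4 * κ * A * N * (∑' k : ℕ, |x (k + 1)|) / ℓ := by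
  have hlin : |(ℓ : ℝ) * (2 - κ * a ℓ) * x ℓ| ≤ (2 + κ * A) * (ℓ * |x ℓ|) := by
    have hcoef : |2 - κ * a ℓ| ≤ 2 + κ * A := by
      refine (abs_sub _ _).trans ?_
      rw [abs_mul, abs_of_nonneg hκ, abs_two]
      gcongr
      exact ha.abs_le hℓ
    rw [abs_mul, abs_mul, Nat.abs_cast, mul_comm (ℓ : ℝ), mul_assoc]
    gcongr
  have hconv := abs_sum_convolution_le ha hx hx₁ hℓ
  have htail := abs_tsum_tailTerm_le ha hx hx₁ hℓ
  have hF : Fmap a κ x ℓ = ℓ * (2 - κ * a ℓ) * x ℓ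
      - κ * ∑ j ∈ Ico 1 ℓ, (j : ℝ) * a j * x j * x (ℓ - j) - κ * ∑' k, tailTerm a x ℓ k := rfl
  have htriangle : ∀ P S₁ S₂ : ℝ, |P - κ * S₁ - κ * S₂| ≤ |P| + κ * |S₁| + κ * |S₂| :=
    fun P S₁ S₂ => by
      simpa only [abs_mul, abs_of_nonneg hκ] using
        (abs_sub _ _).trans (add_le_add_left (abs_sub P (κ * S₁)) |κ * S₂|)
  rw [hF]
  calc _ ≤ _ := htriangle _ _ _
    _ ≤ (2 + κ * A) * (ℓ * |x ℓ|) + κ * (2 * A * N * (∑' k : ℕ, |x (k + 1)|) / ℓ)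
          + κ * (2 * A * N * (∑' k : ℕ, |x (k + 1)|) / ℓ) := by gcongr
    _ = _ := by ring

end Estimates

/-- under `sup_ℓ ℓ|a_ℓ| < ∞`, `F(·,κ)` is a well-defined map `ℓ²_w → ℓ²`,
with the quantitative bound `‖F(x,κ)‖_{ℓ²} ≤ C (1+κ)(‖x‖_w + ‖x‖_w²)`. -/
theorem Fmap_well_defined
    (a : ℕ → ℝ) (hA : ∃ C : ℝ, ∀ ℓ : ℕ, 1 ≤ ℓ → (ℓ : ℝ) * |a ℓ| ≤ C) :
    ∃ C : ℝ, 0 < C ∧ ∀ κ : ℝ, 0 < κ → ∀ x : ℕ → ℝ, MemL2w x →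
      (∀ ℓ : ℕ, 1 ≤ ℓ →
        Summable fun k : ℕ =>
          |(((ℓ + k + 1 : ℕ) : ℝ) * a (ℓ + k + 1) - ((k + 1 : ℕ) : ℝ) * a (k + 1))
            * x (ℓ + k + 1) * x (k + 1)|) ∧
      Summable (fun ℓ : ℕ => Fmap a κ x (ℓ + 1) ^ 2) ∧
      Real.sqrt (∑' ℓ : ℕ, Fmap a κ x (ℓ + 1) ^ 2)
        ≤ C * (1 + κ) * (wnorm x + wnorm x ^ 2) := by
  obtain ⟨C₀, hC₀⟩ := hA
  set A := max C₀ 1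
  have hA : 1 ≤ A := le_max_right _ _
  have ha : InvNatBound a A := fun m hm => (hC₀ m hm).trans (le_max_left _ _)
  set s := ∑' k : ℕ, (1 / ((k + 1 : ℕ) : ℝ)) ^ 2
  have hs : 0 ≤ s := tsum_nonneg fun _ => sq_nonneg _
  refine ⟨4 * A * (1 + s), by positivity, fun κ hκ x hx => ?_⟩
  obtain ⟨hx₁, hT⟩ := hx.summable_abs_and_tsum_abs_le
  have hxN := hx.invNatBound_wnorm
  refine ⟨fun ℓ hℓ => summable_abs_tailTerm ha hxN hx₁ hℓ, ?_⟩
  set N := wnorm x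
  set T := ∑' k : ℕ, |x (k + 1)|
  have hN := hxN.nonneg
  obtain ⟨hsum, hle⟩ := summable_sq_and_sqrt_tsum_sq_le_of_abs_le
    (F := fun ℓ => Fmap a κ x (ℓ + 1)) (c := 2 + κ * A) (d := 4 * κ * A * N * T)
    (by positivity) (by positivity) (fun _ => by positivity) (fun _ => by positivity)
    hx.summable_natCast_mul_abs_sq summable_one_div_natCast_succ_sq
    fun ℓ => (abs_Fmap_le ha hxN hx₁ hκ.le (by omega)).trans_eq (by rw [mul_one_div])
  refine ⟨hsum, hle.trans ?_⟩
  have hκA : 0 ≤ κ * A := by positivity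
  have hAs : 0 ≤ A * s := by positivity
  have hc : 2 + κ * A ≤ 4 * A * (1 + s) * (1 + κ) := by nlinarith [mul_nonneg hAs hκ.le]
  have hd : 4 * κ * A * s ≤ 4 * A * (1 + s) * (1 + κ) := by nlinarith
  calc _ ≤ (2 + κ * A) * N + 4 * κ * A * N * (√s * N) * √s := by
        gcongr
        exact hx.sqrt_tsum_natCast_mul_abs_sq_le_wnorm
    _ = (2 + κ * A) * N + 4 * κ * A * s * N ^ 2 := by
        linear_combination 4 * κ * A * N ^ 2 * Real.mul_self_sqrt hs
    _ ≤ 4 * A * (1 + s) * (1 + κ) * N + 4 * A * (1 + s) * (1 + κ) * N ^ 2 := by gcongr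
    _ = 4 * A * (1 + s) * (1 + κ) * (N + N ^ 2) := by ring
end
end

section
/- Assume sup_{ℓ≥1} ℓ|a_ℓ| < ∞. Let κ* > 0 satisfy κ* a_ℓ ≠ 2 for every ℓ ≥ 1. Then there exists ε > 0 such that every x ∈ ℓ²_w solving the stationary Fourier system at some κ with |κ − κ*| < ε and ‖x‖_w < ε satisfies x = 0; that is, κ* is not a bifurcation point from the trivial branch. -/
open scoped BigOperators
open Filter Topology Real

noncomputable section

/-! Off the critical set the linearisation `x_ℓ ↦ ℓ (2 - κ a_ℓ) x_ℓ` is uniformly invertible: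
as `a_ℓ → 0`, the numbers `|2 - κ a_ℓ|` stay above some `δ > 0` for all `ℓ ≥ 1` and all `κ` near
`κ*`. Using `|j a_j| ≤ C`, the quadratic right-hand side at `ℓ` is at most
`3 |κ| C ‖x‖_{ℓ¹} sup_m |x_m|`, so (dropping the factor `ℓ ≥ 1`)
`δ sup |x| ≤ 3 |κ| C ‖x‖_{ℓ¹} sup |x|`. By Cauchy–Schwarz against the weights `1 + ℓ²`,
`‖x‖_{ℓ¹}` is at most a constant times `‖x‖_w`, so for `‖x‖_w` small this forces `sup |x| = 0`. -/

lemma tendsto_zero_of_natCast_mul_abs_le {a : ℕ → ℝ} {C : ℝ}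
    (hC : ∀ ℓ : ℕ, 1 ≤ ℓ → (ℓ : ℝ) * |a ℓ| ≤ C) : Tendsto a atTop (𝓝 0) := by
  refine squeeze_zero_norm' ?_ (tendsto_const_div_atTop_nhds_zero_nat C)
  filter_upwards [eventually_ge_atTop 1] with ℓ hℓ
  rw [Real.norm_eq_abs, le_div_iff₀' (by exact_mod_cast hℓ)]
  exact hC ℓ hℓ

lemma exists_pos_le_abs_two_sub_mul {a : ℕ → ℝ} (ha : Tendsto a atTop (𝓝 0)) {κ₀ : ℝ}
    (hne : ∀ ℓ : ℕ, 1 ≤ ℓ → κ₀ * a ℓ ≠ 2) :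
    ∃ δ > 0, ∀ ℓ : ℕ, 1 ≤ ℓ → δ ≤ |2 - κ₀ * a ℓ| := by
  have hlim : Tendsto (fun ℓ => |κ₀ * a ℓ|) atTop (𝓝 0) := by
    simpa using (ha.const_mul κ₀).abs
  obtain ⟨N, hN⟩ := eventually_atTop.1 (hlim.eventually (eventually_le_nhds one_pos))
  have hpos : ∀ ℓ ∈ Finset.Ico 1 N, 0 < |2 - κ₀ * a ℓ| := fun ℓ hℓ =>
    abs_pos.2 (sub_ne_zero.2 (hne ℓ (Finset.mem_Ico.1 hℓ).1).symm)
  obtain ⟨δ, hδ, hδ1, hδN⟩ := ((eventually_le_nhds one_pos).and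
    ((Finset.Ico 1 N).eventually_all.2 fun ℓ hℓ => eventually_le_nhds (hpos ℓ hℓ))).exists_gt
  refine ⟨δ, hδ, fun ℓ hℓ => ?_⟩
  rcases lt_or_ge ℓ N with hℓN | hℓN
  · exact hδN ℓ (Finset.mem_Ico.2 ⟨hℓ, hℓN⟩)
  · have htriangle := abs_sub_abs_le_abs_sub 2 (κ₀ * a ℓ)
    rw [abs_two] at htriangle
    linarith [hN ℓ hℓN]

lemma MemL2w.summable_abs_and_tsum_le {x : ℕ → ℝ} (hx : MemL2w x) :
    (Summable fun k => |x (k + 1)|) ∧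
      ∑' k, |x (k + 1)| ≤ √(∑' k : ℕ, 1 / (1 + ((k + 1 : ℕ) : ℝ) ^ 2)) * wnorm x := by
  set w : ℕ → ℝ := fun k => 1 + ((k + 1 : ℕ) : ℝ) ^ 2
  have hw : ∀ k, 0 < w k := fun k => by positivity
  have hfg : ∀ k, (√(w k))⁻¹ * (√(w k) * |x (k + 1)|) = |x (k + 1)| := fun k => by
    rw [inv_mul_cancel_left₀ (Real.sqrt_pos.2 (hw k)).ne']
  have hf2 : ∀ k, (√(w k))⁻¹ ^ (2 : ℝ) = 1 / w k := fun k => by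
    rw [Real.rpow_two, inv_pow, Real.sq_sqrt (hw k).le, one_div]
  have hg2 : ∀ k, (√(w k) * |x (k + 1)|) ^ (2 : ℝ) = w k * x (k + 1) ^ 2 := fun k => by
    rw [Real.rpow_two, mul_pow, Real.sq_sqrt (hw k).le, sq_abs]
  have hw_inv : Summable fun k => 1 / w k := by
    refine Summable.of_nonneg_of_le (fun k => (one_div_pos.2 (hw k)).le) (fun k => ?_)
      ((summable_nat_add_iff 1).2 (Real.summable_one_div_nat_pow.2 one_lt_two))
    exact one_div_le_one_div_of_le (by positivity) (by simp [w])
  have holder := Real.summable_and_inner_le_Lp_mul_Lq_tsum_of_nonneg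
    (f := fun k => (√(w k))⁻¹) (g := fun k => √(w k) * |x (k + 1)|) .two_two
    (fun k => inv_nonneg.2 (Real.sqrt_nonneg (w k))) (fun k => by positivity)
    (by simpa only [hf2] using hw_inv) (by simp only [hg2]; exact hx)
  simp only [hfg, hf2, hg2, ← Real.sqrt_eq_rpow] at holder
  exact holder

lemma half_le_abs_two_sub_mul {δ κ κ₀ b : ℝ} (hgap : δ ≤ |2 - κ₀ * b|)
    (hκ : |κ - κ₀| * |b| ≤ δ / 2) : δ / 2 ≤ |2 - κ * b| := by
  have hperturb := abs_sub_abs_le_abs_sub (2 - κ₀ * b) (2 - κ * b)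
  rw [show 2 - κ₀ * b - (2 - κ * b) = (κ - κ₀) * b by ring, abs_mul] at hperturb
  linarith

lemma abs_mul_mul_le {c y z D B : ℝ} (hc : |c| ≤ D) (hz : |z| ≤ B) :
    |c * y * z| ≤ D * B * |y| := by
  have hD : 0 ≤ D := (abs_nonneg c).trans hc
  calc |c * y * z| = |c| * |z| * |y| := by rw [abs_mul, abs_mul]; ring
    _ ≤ D * B * |y| := by gcongr

section QuadraticEstimate

variable {a x : ℕ → ℝ} {C B : ℝ}

lemma abs_sum_Ico_le (hC : ∀ ℓ : ℕ, 1 ≤ ℓ → (ℓ : ℝ) * |a ℓ| ≤ C)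
    (hx : Summable fun k => |x (k + 1)|) (hB : ∀ m : ℕ, 1 ≤ m → |x m| ≤ B) (ℓ : ℕ) :
    |∑ j ∈ Finset.Ico 1 ℓ, (j : ℝ) * a j * x j * x (ℓ - j)| ≤ C * B * ∑' k, |x (k + 1)| := by
  have hB0 : 0 ≤ B := (abs_nonneg _).trans (hB 1 le_rfl)
  have hC0 : 0 ≤ C := (abs_nonneg _).trans (by simpa using hC 1 le_rfl)
  calc |∑ j ∈ Finset.Ico 1 ℓ, (j : ℝ) * a j * x j * x (ℓ - j)|
      ≤ ∑ j ∈ Finset.Ico 1 ℓ, C * B * |x j| := by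
        refine (Finset.abs_sum_le_sum_abs _ _).trans (Finset.sum_le_sum fun j hj => ?_)
        obtain ⟨hj1, hjℓ⟩ := Finset.mem_Ico.1 hj
        refine abs_mul_mul_le ?_ (hB _ (by omega))
        simpa [abs_mul] using hC j hj1
    _ = C * B * ∑ k ∈ Finset.range (ℓ - 1), |x (k + 1)| := by
        rw [← Finset.mul_sum, Finset.sum_Ico_eq_sum_range]
        simp only [add_comm 1]
    _ ≤ C * B * ∑' k, |x (k + 1)| := by
        gcongr
        exact hx.sum_le_tsum _ fun k _ => abs_nonneg _

lemma abs_tsum_tail_le (hC : ∀ ℓ : ℕ, 1 ≤ ℓ → (ℓ : ℝ) * |a ℓ| ≤ C)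
    (hx : Summable fun k => |x (k + 1)|) (hB : ∀ m : ℕ, 1 ≤ m → |x m| ≤ B) (ℓ : ℕ) :
    |∑' k : ℕ, (((ℓ + k + 1 : ℕ) : ℝ) * a (ℓ + k + 1) - ((k + 1 : ℕ) : ℝ) * a (k + 1))
        * x (ℓ + k + 1) * x (k + 1)| ≤ 2 * C * B * ∑' k, |x (k + 1)| := by
  have hcoeff : ∀ m : ℕ, 1 ≤ m → |(m : ℝ) * a m| ≤ C := fun m hm => by
    simpa [abs_mul] using hC m hm
  refine tsum_of_norm_bounded (E := ℝ) (hx.hasSum.mul_left (2 * C * B)) fun k => ?_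
  rw [Real.norm_eq_abs, mul_right_comm]
  refine abs_mul_mul_le ((abs_sub _ _).trans ?_) (hB _ (by omega))
  linarith [hcoeff (ℓ + k + 1) (by omega), hcoeff (k + 1) (by omega)]

lemma SolvesMV.abs_mul_abs_le {κ : ℝ} (hsol : SolvesMV a κ x)
    (hC : ∀ ℓ : ℕ, 1 ≤ ℓ → (ℓ : ℝ) * |a ℓ| ≤ C)
    (hx : Summable fun k => |x (k + 1)|) (hB : ∀ m : ℕ, 1 ≤ m → |x m| ≤ B)
    {ℓ : ℕ} (hℓ : 1 ≤ ℓ) :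
    |2 - κ * a ℓ| * |x ℓ| ≤ 3 * |κ| * C * (∑' k, |x (k + 1)|) * B := by
  calc |2 - κ * a ℓ| * |x ℓ| ≤ ℓ * (|2 - κ * a ℓ| * |x ℓ|) :=
        le_mul_of_one_le_left (by positivity) (by exact_mod_cast hℓ)
    _ = |(ℓ : ℝ) * (2 - κ * a ℓ) * x ℓ| := by rw [abs_mul, abs_mul, Nat.abs_cast, mul_assoc]
    _ ≤ |κ| * (C * B * ∑' k, |x (k + 1)|) + |κ| * (2 * C * B * ∑' k, |x (k + 1)|) := by
        rw [(hsol ℓ hℓ).2]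
        refine (abs_add_le _ _).trans ?_
        rw [abs_mul, abs_mul]
        gcongr
        · exact abs_sum_Ico_le hC hx hB ℓ
        · exact abs_tsum_tail_le hC hx hB ℓ
    _ = 3 * |κ| * C * (∑' k, |x (k + 1)|) * B := by ring

lemma SolvesMV.eq_zero_of_tsum_abs_lt {κ δ : ℝ} (hsol : SolvesMV a κ x)
    (hC : ∀ ℓ : ℕ, 1 ≤ ℓ → (ℓ : ℝ) * |a ℓ| ≤ C) (hδ : 0 < δ)
    (hgap : ∀ ℓ : ℕ, 1 ≤ ℓ → δ ≤ |2 - κ * a ℓ|) (hx : Summable fun k => |x (k + 1)|)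
    (hsmall : 3 * |κ| * C * ∑' k, |x (k + 1)| < δ) :
    ∀ ℓ : ℕ, 1 ≤ ℓ → x ℓ = 0 := by
  have hbdd : BddAbove (Set.range fun k => |x (k + 1)|) := by
    refine ⟨∑' k, |x (k + 1)|, ?_⟩
    rintro _ ⟨k, rfl⟩
    exact hx.le_tsum k fun j _ => abs_nonneg _
  set M := ⨆ k, |x (k + 1)|
  have hM : ∀ m : ℕ, 1 ≤ m → |x m| ≤ M := fun m hm => by
    obtain ⟨k, rfl⟩ := Nat.exists_eq_add_of_le' hm
    exact le_ciSup hbdd k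
  have hM0 : 0 ≤ M := (abs_nonneg _).trans (hM 1 le_rfl)
  have hcontract : δ * M ≤ 3 * |κ| * C * (∑' k, |x (k + 1)|) * M := by
    rw [Real.mul_iSup_of_nonneg hδ.le]
    exact ciSup_le fun k => (mul_le_mul_of_nonneg_right (hgap _ le_add_self) (abs_nonneg _)).trans
      (hsol.abs_mul_abs_le hC hx hM le_add_self)
  have hMzero : M ≤ 0 := by nlinarith
  exact fun ℓ hℓ => abs_nonpos_iff.1 ((hM ℓ hℓ).trans hMzero)

end QuadraticEstimate

theorem no_bifurcation_off_critical_set_general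
    (a : ℕ → ℝ) (hA : ∃ C : ℝ, ∀ ℓ : ℕ, 1 ≤ ℓ → (ℓ : ℝ) * |a ℓ| ≤ C)
    (κstar : ℝ) (hne : ∀ ℓ : ℕ, 1 ≤ ℓ → κstar * a ℓ ≠ 2) :
    ∃ ε : ℝ, 0 < ε ∧ ∀ κ : ℝ, |κ - κstar| < ε →
      ∀ x : ℕ → ℝ, MemL2w x → wnorm x < ε → SolvesMV a κ x →
        ∀ ℓ : ℕ, 1 ≤ ℓ → x ℓ = 0 := by
  obtain ⟨C, hC⟩ := hA
  have ha : ∀ ℓ : ℕ, 1 ≤ ℓ → |a ℓ| ≤ C := fun ℓ hℓ =>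
    (le_mul_of_one_le_left (abs_nonneg _) (by exact_mod_cast hℓ)).trans (hC ℓ hℓ)
  have hC0 : 0 ≤ C := (abs_nonneg _).trans (ha 1 le_rfl)
  obtain ⟨δ, hδ, hgap⟩ :=
    exists_pos_le_abs_two_sub_mul (tendsto_zero_of_natCast_mul_abs_le hC) hne
  set K := √(∑' k : ℕ, 1 / (1 + ((k + 1 : ℕ) : ℝ) ^ 2))
  set R := (|κstar| + 1) * (C + 1) * (K + 1)
  have hK : 0 ≤ K := Real.sqrt_nonneg _
  have hR : 0 < R := by positivity
  have hCR : C ≤ R := calc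
    C ≤ 1 * (C + 1) * 1 := by linarith
    _ ≤ (|κstar| + 1) * (C + 1) * (K + 1) := by gcongr <;> linarith [abs_nonneg κstar, hK]
  refine ⟨min 1 (δ / (8 * R)), by positivity, fun κ hκ x hx hxw hsol => ?_⟩
  have hκR := (lt_div_iff₀ (by positivity)).1 (lt_min_iff.1 hκ).2
  have hWR := (lt_div_iff₀ (by positivity)).1 (lt_min_iff.1 hxw).2
  obtain ⟨hS, hSK : _ ≤ K * wnorm x⟩ := hx.summable_abs_and_tsum_le
  have hbound : |κ| * C * ∑' k, |x (k + 1)| ≤ R * wnorm x := calc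
    _ ≤ (|κstar| + 1) * (C + 1) * ((K + 1) * wnorm x) := by
      gcongr
      · linarith [abs_sub_abs_le_abs_sub κ κstar, (lt_min_iff.1 hκ).1]
      · linarith
      · exact hSK.trans (mul_le_mul_of_nonneg_right (by linarith) (Real.sqrt_nonneg _))
    _ = R * wnorm x := by ring
  refine hsol.eq_zero_of_tsum_abs_lt hC (half_pos hδ)
    (fun ℓ hℓ => half_le_abs_two_sub_mul (hgap ℓ hℓ) ?_) hS (by linarith)
  nlinarith [ha ℓ hℓ, abs_nonneg (κ - κstar)]

/-- if `κ* a_ℓ ≠ 2` for every `ℓ ≥ 1`, then `κ*` is not a bifurcation point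
from the trivial branch: all small solutions near `κ*` vanish. -/
theorem no_bifurcation_off_critical_set
    (a : ℕ → ℝ) (hA : ∃ C : ℝ, ∀ ℓ : ℕ, 1 ≤ ℓ → (ℓ : ℝ) * |a ℓ| ≤ C)
    (κstar : ℝ) (hκ : 0 < κstar) (hne : ∀ ℓ : ℕ, 1 ≤ ℓ → κstar * a ℓ ≠ 2) :
    ∃ ε : ℝ, 0 < ε ∧ ∀ κ : ℝ, |κ - κstar| < ε →
      ∀ x : ℕ → ℝ, MemL2w x → wnorm x < ε → SolvesMV a κ x →
        ∀ ℓ : ℕ, 1 ≤ ℓ → x ℓ = 0 :=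
  no_bifurcation_off_critical_set_general a hA κstar hne
end
end

section
/- Assume sup_{ℓ≥1} ℓ|a_ℓ| < ∞ and let m ≥ 1. Define b : ℕ≥1 → ℝ by b_ℓ := a_{ℓm}. Suppose q ∈ ℓ²_w solves the stationary Fourier system at κ > 0 for the coefficients b. Define p : ℕ≥1 → ℝ by p_{ℓm} := q_ℓ for every ℓ ≥ 1 and p_j := 0 whenever m does not divide j. Then p ∈ ℓ²_w and p solves the stationary Fourier system at κ for the coefficients a; in particular, p is m-periodic in the sense that its only possibly nonzero Fourier modes are at multiples of m. -/
/-!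
A product `p_i p_j` of modes of the lift vanishes unless `m` divides both `i` and `j`. Hence at a
mode `ℓ` with `m ∤ ℓ` every term of the equation vanishes, while at `ℓ = n m` the substitution
`j = i m` turns the finite sum and the tail series of the system for `p` at `n m` into `m` times
those of the system for `q` at `n` (with coefficients `b_i = a_{i m}`), and the left-hand side
`n m (2 - κ a_{n m}) q_n` scales by the same factor `m`. The weighted norm of `p` is at most `m`
times that of `q`.
-/

open scoped BigOperators
open Filter Topology Real

noncomputable section

open Finset

section Dilation

variable {m : ℕ}

theorem hasSum_succ_iff_hasSum_succ_mul {α : Type*} [AddCommMonoid α] [TopologicalSpace α]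
    (hm : 0 < m) {f : ℕ → α} (hf : ∀ i, ¬ m ∣ i → f i = 0) {s : α} :
    HasSum (fun k => f (k + 1)) s ↔ HasSum (fun t => f ((t + 1) * m)) s := by
  set e : ℕ → ℕ := fun t => (t + 1) * m - 1
  have he : ∀ t, e t + 1 = (t + 1) * m := fun t => Nat.sub_add_cancel (Nat.mul_pos t.succ_pos hm)
  have he_inj : e.Injective := fun s t hst => by
    have : (s + 1) * m = (t + 1) * m := by rw [← he s, ← he t, hst]
    have := Nat.eq_of_mul_eq_mul_right hm this
    omega
  have hsupp : ∀ k ∉ Set.range e, f (k + 1) = 0 := by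
    refine fun k hk => hf _ fun ⟨t, ht⟩ => ?_
    cases t with
    | zero => omega
    | succ t => exact hk ⟨t, Nat.sub_eq_of_eq_add (by rw [ht, mul_comm])⟩
  rw [← he_inj.hasSum_iff hsupp]
  simp only [Function.comp_def, he]

theorem summable_succ_iff_summable_succ_mul {α : Type*} [AddCommMonoid α] [TopologicalSpace α]
    (hm : 0 < m) {f : ℕ → α} (hf : ∀ i, ¬ m ∣ i → f i = 0) :
    Summable (fun k => f (k + 1)) ↔ Summable (fun t => f ((t + 1) * m)) :=
  exists_congr fun _ => hasSum_succ_iff_hasSum_succ_mul hm hf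

theorem sum_Ico_one_mul_eq_sum_Ico_one {M : Type*} [AddCommMonoid M] (hm : 0 < m) {f : ℕ → M}
    (hf : ∀ j, ¬ m ∣ j → f j = 0) (n : ℕ) :
    ∑ j ∈ Ico 1 (n * m), f j = ∑ i ∈ Ico 1 n, f (i * m) := by
  refine (sum_of_injOn (· * m) (fun i _ j _ h => Nat.eq_of_mul_eq_mul_right hm h) ?_ ?_
    fun _ _ => rfl).symm
  · intro i hi
    simp only [coe_Ico, Set.mem_Ico] at hi ⊢
    exact ⟨Nat.one_le_iff_ne_zero.2 (Nat.mul_ne_zero (by omega) (by omega)),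
      Nat.mul_lt_mul_of_pos_right hi.2 hm⟩
  · intro j hj hj_img
    refine hf j fun ⟨i, hi⟩ => hj_img ⟨i, ?_, by rw [hi, mul_comm]⟩
    simp only [coe_Ico, Set.mem_Ico, mem_Ico] at hj ⊢
    subst hi
    exact ⟨Nat.pos_of_ne_zero (by rintro rfl; omega),
      Nat.lt_of_mul_lt_mul_left (mul_comm n m ▸ hj.2)⟩

end Dilation

def mvTailTerm (a x : ℕ → ℝ) (ℓ k : ℕ) : ℝ :=
  (((ℓ + k + 1 : ℕ) : ℝ) * a (ℓ + k + 1) - ((k + 1 : ℕ) : ℝ) * a (k + 1))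
    * x (ℓ + k + 1) * x (k + 1)

def mvConvSum (a x : ℕ → ℝ) (ℓ : ℕ) : ℝ :=
  ∑ j ∈ Ico 1 ℓ, (j : ℝ) * a j * x j * x (ℓ - j)

def SolvesMVAt (a : ℕ → ℝ) (κ : ℝ) (x : ℕ → ℝ) (ℓ : ℕ) : Prop :=
  Summable (mvTailTerm a x ℓ) ∧
    (ℓ : ℝ) * (2 - κ * a ℓ) * x ℓ = κ * mvConvSum a x ℓ + κ * ∑' k, mvTailTerm a x ℓ k

theorem solvesMV_iff {a : ℕ → ℝ} {κ : ℝ} {x : ℕ → ℝ} :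
    SolvesMV a κ x ↔ ∀ ℓ, 1 ≤ ℓ → SolvesMVAt a κ x ℓ :=
  Iff.rfl

section PeriodicLift

variable {m : ℕ} {p q : ℕ → ℝ}

theorem apply_eq_zero_of_not_dvd (hp2 : ∀ j : ℕ, 1 ≤ j → ¬ m ∣ j → p j = 0) {j : ℕ}
    (hj : ¬ m ∣ j) : p j = 0 :=
  hp2 j (Nat.one_le_iff_ne_zero.2 fun h => hj (h ▸ dvd_zero m)) hj

theorem apply_mul_apply_eq_zero (hp2 : ∀ j : ℕ, 1 ≤ j → ¬ m ∣ j → p j = 0) {i j : ℕ}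
    (hij : ¬ (m ∣ i ∧ m ∣ j)) : p i * p j = 0 := by
  rcases not_and_or.1 hij with h | h
  · rw [apply_eq_zero_of_not_dvd hp2 h, zero_mul]
  · rw [apply_eq_zero_of_not_dvd hp2 h, mul_zero]

theorem memL2w_of_lift (hp1 : ∀ ℓ : ℕ, 1 ≤ ℓ → p (ℓ * m) = q ℓ)
    (hp2 : ∀ j : ℕ, 1 ≤ j → ¬ m ∣ j → p j = 0) (hq : MemL2w q) : MemL2w p := by
  rcases m.eq_zero_or_pos with rfl | hm
  · have hp : ∀ ℓ : ℕ, p (ℓ + 1) = 0 := fun ℓ => apply_eq_zero_of_not_dvd hp2 (by simp)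
    simp [MemL2w, hp]
  have hw : ∀ i, ¬ m ∣ i → (1 + (i : ℝ) ^ 2) * p i ^ 2 = 0 := fun i hi => by
    rw [apply_eq_zero_of_not_dvd hp2 hi]; ring
  refine (summable_succ_iff_summable_succ_mul hm hw).2 ((hq.mul_left ((m : ℝ) ^ 2)).of_nonneg_of_le
    (fun t => by positivity) fun t => ?_)
  rw [hp1 _ t.succ_pos]
  have hm1 : (1 : ℝ) ≤ m := by exact_mod_cast hm
  have hweight : 1 + (((t + 1) * m : ℕ) : ℝ) ^ 2 ≤ (m : ℝ) ^ 2 * (1 + ((t + 1 : ℕ) : ℝ) ^ 2) := by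
    push_cast
    nlinarith
  rw [← mul_assoc]
  exact mul_le_mul_of_nonneg_right hweight (sq_nonneg _)

theorem solvesMVAt_lift_of_not_dvd (hp2 : ∀ j : ℕ, 1 ≤ j → ¬ m ∣ j → p j = 0)
    (a : ℕ → ℝ) (κ : ℝ) {ℓ : ℕ} (hℓ : 1 ≤ ℓ) (hmℓ : ¬ m ∣ ℓ) : SolvesMVAt a κ p ℓ := by
  have htail : mvTailTerm a p ℓ = 0 := funext fun k => by
    have hpp : p (ℓ + k + 1) * p (k + 1) = 0 :=
      apply_mul_apply_eq_zero hp2 fun h => hmℓ ((Nat.dvd_add_left h.2).1 h.1)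
    simp only [mvTailTerm, Pi.zero_apply, mul_assoc, hpp, mul_zero]
  have hconv : mvConvSum a p ℓ = 0 := sum_eq_zero fun j hj => by
    rw [mem_Ico] at hj
    have hpp : p j * p (ℓ - j) = 0 :=
      apply_mul_apply_eq_zero hp2 fun h => hmℓ (Nat.sub_add_cancel hj.2.le ▸ dvd_add h.2 h.1)
    rw [mul_assoc, hpp, mul_zero]
  refine ⟨htail ▸ summable_zero, ?_⟩
  simp [htail, hconv, hp2 ℓ hℓ hmℓ]

theorem mvConvSum_lift (hm : 0 < m) (hp1 : ∀ ℓ : ℕ, 1 ≤ ℓ → p (ℓ * m) = q ℓ)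
    (hp2 : ∀ j : ℕ, 1 ≤ j → ¬ m ∣ j → p j = 0) (a : ℕ → ℝ) (n : ℕ) :
    mvConvSum a p (n * m) = m * mvConvSum (fun ℓ => a (ℓ * m)) q n := by
  have hf : ∀ j, ¬ m ∣ j → (j : ℝ) * a j * p j * p (n * m - j) = 0 := fun j hj => by
    rw [apply_eq_zero_of_not_dvd hp2 hj]; ring
  rw [mvConvSum, sum_Ico_one_mul_eq_sum_Ico_one hm hf, mvConvSum, mul_sum]
  refine sum_congr rfl fun i hi => ?_
  rw [mem_Ico] at hi
  rw [← Nat.sub_mul, hp1 i hi.1, hp1 (n - i) (by omega)]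
  push_cast
  ring

theorem hasSum_mvTailTerm_lift (hm : 0 < m) (hp1 : ∀ ℓ : ℕ, 1 ≤ ℓ → p (ℓ * m) = q ℓ)
    (hp2 : ∀ j : ℕ, 1 ≤ j → ¬ m ∣ j → p j = 0) (a : ℕ → ℝ) {n : ℕ} (hn : 1 ≤ n) {s : ℝ}
    (hs : HasSum (mvTailTerm (fun ℓ => a (ℓ * m)) q n) s) :
    HasSum (mvTailTerm a p (n * m)) (m * s) := by
  set g : ℕ → ℝ := fun i =>
    (((n * m + i : ℕ) : ℝ) * a (n * m + i) - (i : ℝ) * a i) * p (n * m + i) * p i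
  have hg : ∀ i, ¬ m ∣ i → g i = 0 := fun i hi => by
    simp only [g, apply_eq_zero_of_not_dvd hp2 hi, mul_zero]
  change HasSum (fun k => g (k + 1)) _
  rw [hasSum_succ_iff_hasSum_succ_mul hm hg]
  refine (hs.mul_left (m : ℝ)).congr_fun fun t => ?_
  have hidx : n * m + (t + 1) * m = (n + t + 1) * m := by ring
  simp only [g, mvTailTerm, hidx, hp1 _ (by omega : 1 ≤ n + t + 1), hp1 _ t.succ_pos]
  push_cast
  ring

theorem solvesMVAt_lift_mul (hm : 0 < m) (hp1 : ∀ ℓ : ℕ, 1 ≤ ℓ → p (ℓ * m) = q ℓ)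
    (hp2 : ∀ j : ℕ, 1 ≤ j → ¬ m ∣ j → p j = 0) {a : ℕ → ℝ} {κ : ℝ} {n : ℕ} (hn : 1 ≤ n)
    (hq : SolvesMVAt (fun ℓ => a (ℓ * m)) κ q n) : SolvesMVAt a κ p (n * m) := by
  obtain ⟨hq_summable, hq_eq⟩ := hq
  have htail := hasSum_mvTailTerm_lift hm hp1 hp2 a hn hq_summable.hasSum
  refine ⟨htail.summable, ?_⟩
  rw [htail.tsum_eq, mvConvSum_lift hm hp1 hp2, hp1 n hn]
  push_cast
  linear_combination (m : ℝ) * hq_eq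

end PeriodicLift

theorem periodic_lift_solves_general
    (a : ℕ → ℝ)
    (m : ℕ) (κ : ℝ)
    (q : ℕ → ℝ) (hq : MemL2w q)
    (hqsol : SolvesMV (fun ℓ => a (ℓ * m)) κ q)
    (p : ℕ → ℝ)
    (hp1 : ∀ ℓ : ℕ, 1 ≤ ℓ → p (ℓ * m) = q ℓ)
    (hp2 : ∀ j : ℕ, 1 ≤ j → ¬ m ∣ j → p j = 0) :
    MemL2w p ∧ SolvesMV a κ p := by
  refine ⟨memL2w_of_lift hp1 hp2 hq, solvesMV_iff.2 fun ℓ hℓ => ?_⟩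
  by_cases hmℓ : m ∣ ℓ
  · obtain ⟨n, rfl⟩ := hmℓ
    have hm : 0 < m := Nat.pos_of_mul_pos_right hℓ
    have hn : 1 ≤ n := Nat.pos_of_mul_pos_left hℓ
    rw [mul_comm]
    exact solvesMVAt_lift_mul hm hp1 hp2 hn (hqsol n hn)
  · exact solvesMVAt_lift_of_not_dvd hp2 a κ hℓ hmℓ

/-- from a solution `q` of the Fourier system for the dilated coefficients
`b_ℓ = a_{ℓm}`, the `m`-periodic lift `p` (with `p_{ℓm} = q_ℓ` and `p_j = 0` for `m ∤ j`)
lies in `ℓ²_w` and solves the Fourier system for the coefficients `a`. -/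
theorem periodic_lift_solves
    (a : ℕ → ℝ) (hA : ∃ C : ℝ, ∀ ℓ : ℕ, 1 ≤ ℓ → (ℓ : ℝ) * |a ℓ| ≤ C)
    (m : ℕ) (hm : 1 ≤ m) (κ : ℝ) (hκ : 0 < κ)
    (q : ℕ → ℝ) (hq : MemL2w q)
    (hqsol : SolvesMV (fun ℓ => a (ℓ * m)) κ q)
    (p : ℕ → ℝ)
    (hp1 : ∀ ℓ : ℕ, 1 ≤ ℓ → p (ℓ * m) = q ℓ)
    (hp2 : ∀ j : ℕ, 1 ≤ j → ¬ m ∣ j → p j = 0) :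
    MemL2w p ∧ SolvesMV a κ p :=
  periodic_lift_solves_general a m κ q hq hqsol p hp1 hp2
end
end

section
/- Assume ∑_{j≥1} j² a_j² < ∞ and that there exists m ≥ 1 with a_m > 0. Let S := {ℓ ≥ 1 : a_ℓ = a_m} (a necessarily finite set) and assume g := gcd(S) > 1. Then for every C > 0 there exist δ′ > 0 and η′ > 0 such that: for every κ ∈ [2/a_m − δ′, 2/a_m + δ′] and every square-summable sequence χ solving the stationary Fourier system at κ and satisfying |χ_ℓ| ≤ C ∑_{k∈S} |χ_k| for all ℓ ≥ 1 as well as ∑_{k∈S} |χ_k| ≤ η′, one has χ_ℓ = 0 for every ℓ ≥ 1 with g ∤ ℓ (i.e. the solution is g-periodic). -/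
open scoped BigOperators
open Filter Topology Real

noncomputable section

lemma my_finset_cs (s : Finset ℕ) (u v : ℕ → ℝ) :
    ∑ n ∈ s, |u n| * |v n| ≤ Real.sqrt (∑ n ∈ s, u n ^ 2) * Real.sqrt (∑ n ∈ s, v n ^ 2) := by
  have h := Finset.sum_mul_sq_le_sq_mul_sq s (fun n => |u n|) (fun n => |v n|)
  simp only [sq_abs] at h
  have hu0 : 0 ≤ ∑ n ∈ s, u n ^ 2 := Finset.sum_nonneg fun n _ => sq_nonneg _
  calc ∑ n ∈ s, |u n| * |v n|
      ≤ Real.sqrt ((∑ n ∈ s, u n ^ 2) * ∑ n ∈ s, v n ^ 2) := Real.le_sqrt_of_sq_le h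
    _ = _ := Real.sqrt_mul hu0 _

lemma my_summable_absmul (u v : ℕ → ℝ) (hu : Summable fun n => u n ^ 2)
    (hv : Summable fun n => v n ^ 2) : Summable fun n => |u n| * |v n| := by
  have hg : Summable fun n => (u n ^ 2 + v n ^ 2) / 2 := (hu.add hv).div_const 2
  have hle : ∀ n, |u n| * |v n| ≤ (u n ^ 2 + v n ^ 2) / 2 := by
    intro n
    nlinarith [sq_nonneg (|u n| - |v n|), sq_abs (u n), sq_abs (v n)]
  exact Summable.of_nonneg_of_le (fun n => mul_nonneg (abs_nonneg _) (abs_nonneg _)) hle hg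

lemma my_tsum_cs (u v : ℕ → ℝ) (hu : Summable fun n => u n ^ 2)
    (hv : Summable fun n => v n ^ 2) :
    ∑' n, |u n| * |v n| ≤ Real.sqrt (∑' n, u n ^ 2) * Real.sqrt (∑' n, v n ^ 2) := by
  apply Summable.tsum_le_of_sum_le (my_summable_absmul u v hu hv)
  intro s
  refine (my_finset_cs s u v).trans ?_
  have h1 : ∑ n ∈ s, u n ^ 2 ≤ ∑' n, u n ^ 2 := Summable.sum_le_tsum s (fun n _ => sq_nonneg _) hu
  have h2 : ∑ n ∈ s, v n ^ 2 ≤ ∑' n, v n ^ 2 := Summable.sum_le_tsum s (fun n _ => sq_nonneg _) hv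
  exact mul_le_mul (Real.sqrt_le_sqrt h1) (Real.sqrt_le_sqrt h2) (Real.sqrt_nonneg _)
    (Real.sqrt_nonneg _)

lemma my_abs_tsum (f : ℕ → ℝ) (h : Summable fun k => |f k|) :
    |∑' k, f k| ≤ ∑' k, |f k| :=
  norm_tsum_le_tsum_norm (f := f) h

lemma my_sum_map_le_tsum (f : ℕ → ℝ) (hf : ∀ n, 0 ≤ f n)
    (hs : Summable fun i => f (i + 1)) (t : Finset ℕ) (e : ℕ → ℕ)
    (he : ∀ x ∈ t, ∀ y ∈ t, e x = e y → x = y) (h1 : ∀ n ∈ t, 1 ≤ e n) :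
    ∑ n ∈ t, f (e n) ≤ ∑' i, f (i + 1) := by
  have himg : ∑ n ∈ t, f (e n) = ∑ m ∈ t.image e, f m := (Finset.sum_image he).symm
  rw [himg]
  set u := t.image e with hu
  have hu1 : ∀ m ∈ u, 1 ≤ m := by
    intro m hm
    obtain ⟨n, hn, rfl⟩ := Finset.mem_image.1 hm
    exact h1 n hn
  have hinj : ∀ x ∈ u, ∀ y ∈ u, x - 1 = y - 1 → x = y := by
    intro x hx y hy hxy
    have := hu1 x hx; have := hu1 y hy; omega
  have : ∑ m ∈ u, f m = ∑ i ∈ u.image (· - 1), f (i + 1) := by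
    rw [Finset.sum_image hinj]
    apply Finset.sum_congr rfl
    intro m hm
    congr 1
    have := hu1 m hm; omega
  rw [this]
  exact Summable.sum_le_tsum _ (fun i _ => hf _) hs

lemma my_tsum_shift_le (F : ℕ → ℝ) (hF : ∀ n, 0 ≤ F n) (h : Summable F) (ℓ : ℕ) :
    ∑' k, F (k + ℓ) ≤ ∑' k, F k :=
  Summable.tsum_le_tsum_of_inj (fun k => k + ℓ) (add_left_injective ℓ) (fun c _ => hF c)
    (fun _ => le_rfl) ((summable_nat_add_iff ℓ).2 h) h

set_option maxHeartbeats 1200000 in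
lemma key_estimate (a : ℕ → ℝ) (κ : ℝ) (hκ : 0 ≤ κ) (χ : ℕ → ℝ)
    (hsa : Summable fun i : ℕ => (((i + 1 : ℕ) : ℝ) * a (i + 1)) ^ 2)
    (hχ : Summable fun i : ℕ => χ (i + 1) ^ 2)
    (hsol : SolvesMV a κ χ) (D : ℝ) (hD : 0 ≤ D) (ℓ : ℕ) (hℓ : 1 ≤ ℓ)
    (hpair : ∀ p q : ℕ, 1 ≤ p → 1 ≤ q → (p + q = ℓ ∨ p = q + ℓ) →
      |χ p| * |χ q| ≤ D * (|χ p| + |χ q|)) :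
    (ℓ : ℝ) * |2 - κ * a ℓ| * |χ ℓ| ≤
      κ * 6 * Real.sqrt (∑' i : ℕ, (((i + 1 : ℕ) : ℝ) * a (i + 1)) ^ 2) * D *
        Real.sqrt (∑' i : ℕ, χ (i + 1) ^ 2) := by
  classical
  set F : ℕ → ℝ := fun i => (((i + 1 : ℕ) : ℝ) * a (i + 1)) ^ 2 with hF
  set Fχ : ℕ → ℝ := fun i => χ (i + 1) ^ 2 with hFχ
  set T : ℝ := ∑' i, F i with hT
  set N2 : ℝ := ∑' i, Fχ i with hN2
  set A : ℝ := Real.sqrt T with hA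
  set nχ : ℝ := Real.sqrt N2 with hnχ
  have hA0 : 0 ≤ A := Real.sqrt_nonneg _
  have hn0 : 0 ≤ nχ := Real.sqrt_nonneg _
  have hFnn : ∀ n, 0 ≤ F n := fun n => sq_nonneg _
  have hFχnn : ∀ n, 0 ≤ Fχ n := fun n => sq_nonneg _
  -- generic : finset sums of ((n)a n)^2 over indices ≥1 are ≤ T, and of χ² ≤ N2
  have hfa : ∀ (t : Finset ℕ) (e : ℕ → ℕ), (∀ x ∈ t, ∀ y ∈ t, e x = e y → x = y) →
      (∀ n ∈ t, 1 ≤ e n) → ∑ n ∈ t, ((e n : ℝ) * a (e n)) ^ 2 ≤ T := by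
    intro t e he h1
    have := my_sum_map_le_tsum (fun n => ((n : ℝ) * a n) ^ 2) (fun n => sq_nonneg _)
      (by exact_mod_cast hsa) t e he h1
    calc ∑ n ∈ t, ((e n : ℝ) * a (e n)) ^ 2 ≤ ∑' i, (((i + 1 : ℕ) : ℝ) * a (i + 1)) ^ 2 := by
          exact_mod_cast this
      _ = T := rfl
  have hfχ : ∀ (t : Finset ℕ) (e : ℕ → ℕ), (∀ x ∈ t, ∀ y ∈ t, e x = e y → x = y) →
      (∀ n ∈ t, 1 ≤ e n) → ∑ n ∈ t, χ (e n) ^ 2 ≤ N2 := by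
    intro t e he h1
    exact my_sum_map_le_tsum (fun n => χ n ^ 2) (fun n => sq_nonneg _) hχ t e he h1
  obtain ⟨hsumm, heq⟩ := hsol ℓ hℓ
  -- convolution bound
  have hSB1 : ∑ j ∈ Finset.Ico 1 ℓ, |(j : ℝ) * a j| * |χ j| ≤ A * nχ := by
    refine (my_finset_cs _ (fun j => (j : ℝ) * a j) χ).trans ?_
    refine mul_le_mul (Real.sqrt_le_sqrt ?_) (Real.sqrt_le_sqrt ?_) (Real.sqrt_nonneg _) hA0
    · exact hfa _ id (fun x _ y _ h => h) (fun n hn => (Finset.mem_Ico.1 hn).1)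
    · exact hfχ _ id (fun x _ y _ h => h) (fun n hn => (Finset.mem_Ico.1 hn).1)
  have hSB2 : ∑ j ∈ Finset.Ico 1 ℓ, |(j : ℝ) * a j| * |χ (ℓ - j)| ≤ A * nχ := by
    refine (my_finset_cs _ (fun j => (j : ℝ) * a j) (fun j => χ (ℓ - j))).trans ?_
    refine mul_le_mul (Real.sqrt_le_sqrt ?_) (Real.sqrt_le_sqrt ?_) (Real.sqrt_nonneg _) hA0
    · exact hfa _ id (fun x _ y _ h => h) (fun n hn => (Finset.mem_Ico.1 hn).1)
    · refine hfχ _ (fun j => ℓ - j) ?_ ?_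
      · intro x hx y hy h
        have h' : ℓ - x = ℓ - y := h
        have hx' := Finset.mem_Ico.1 hx; have hy' := Finset.mem_Ico.1 hy; omega
      · intro n hn
        show 1 ≤ ℓ - n
        have := Finset.mem_Ico.1 hn; omega
  have hconv : |∑ j ∈ Finset.Ico 1 ℓ, (j : ℝ) * a j * χ j * χ (ℓ - j)| ≤ 2 * A * D * nχ := by
    have hterm : ∀ j ∈ Finset.Ico 1 ℓ, |(j : ℝ) * a j * χ j * χ (ℓ - j)| ≤
        D * (|(j : ℝ) * a j| * |χ j| + |(j : ℝ) * a j| * |χ (ℓ - j)|) := by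
      intro j hj
      have hj' := Finset.mem_Ico.1 hj
      have hp := hpair j (ℓ - j) hj'.1 (by omega) (Or.inl (by omega))
      have h1 : |(j : ℝ) * a j * χ j * χ (ℓ - j)| = |(j : ℝ) * a j| * (|χ j| * |χ (ℓ - j)|) := by
        rw [abs_mul, abs_mul]; ring
      rw [h1]
      calc |(j : ℝ) * a j| * (|χ j| * |χ (ℓ - j)|)
          ≤ |(j : ℝ) * a j| * (D * (|χ j| + |χ (ℓ - j)|)) :=
            mul_le_mul_of_nonneg_left hp (abs_nonneg _)
        _ = D * (|(j : ℝ) * a j| * |χ j| + |(j : ℝ) * a j| * |χ (ℓ - j)|) := by ring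
    calc |∑ j ∈ Finset.Ico 1 ℓ, (j : ℝ) * a j * χ j * χ (ℓ - j)|
        ≤ ∑ j ∈ Finset.Ico 1 ℓ, |(j : ℝ) * a j * χ j * χ (ℓ - j)| :=
          Finset.abs_sum_le_sum_abs _ _
      _ ≤ ∑ j ∈ Finset.Ico 1 ℓ,
            D * (|(j : ℝ) * a j| * |χ j| + |(j : ℝ) * a j| * |χ (ℓ - j)|) :=
          Finset.sum_le_sum hterm
      _ = D * ((∑ j ∈ Finset.Ico 1 ℓ, |(j : ℝ) * a j| * |χ j|)
            + ∑ j ∈ Finset.Ico 1 ℓ, |(j : ℝ) * a j| * |χ (ℓ - j)|) := by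
          rw [← Finset.mul_sum, Finset.sum_add_distrib]
      _ ≤ D * (A * nχ + A * nχ) := by
          refine mul_le_mul_of_nonneg_left (add_le_add hSB1 hSB2) hD
      _ = 2 * A * D * nχ := by ring
  -- tail bound
  have hsaF : Summable F := hsa
  have hFχs : Summable Fχ := hχ
  have hre1 : (fun k => (((ℓ + k + 1 : ℕ) : ℝ) * a (ℓ + k + 1)) ^ 2) = fun k => F (k + ℓ) := by
    funext k
    have e : ℓ + k + 1 = k + ℓ + 1 := by omega
    simp only [hF, e]
  have hre2 : (fun k => χ (ℓ + k + 1) ^ 2) = fun k => Fχ (k + ℓ) := by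
    funext k
    have e : ℓ + k + 1 = k + ℓ + 1 := by omega
    simp only [hFχ, e]
  have hu2 : Summable fun k => (((ℓ + k + 1 : ℕ) : ℝ) * a (ℓ + k + 1)) ^ 2 := by
    rw [hre1]; exact (summable_nat_add_iff ℓ).2 hsaF
  have hχ2sh : Summable fun k => χ (ℓ + k + 1) ^ 2 := by
    rw [hre2]; exact (summable_nat_add_iff ℓ).2 hFχs
  have hu1 : Summable fun k => (((k + 1 : ℕ) : ℝ) * a (k + 1)) ^ 2 := hsa
  have hχ2 : Summable fun k => χ (k + 1) ^ 2 := hχ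
  have hTsh : ∑' k, (((ℓ + k + 1 : ℕ) : ℝ) * a (ℓ + k + 1)) ^ 2 ≤ T := by
    rw [hre1]; exact my_tsum_shift_le F hFnn hsaF ℓ
  have hNsh : ∑' k, χ (ℓ + k + 1) ^ 2 ≤ N2 := by
    rw [hre2]; exact my_tsum_shift_le Fχ hFχnn hFχs ℓ
  have hTe : ∑' k, (((k + 1 : ℕ) : ℝ) * a (k + 1)) ^ 2 = T := rfl
  have hNe : ∑' k, χ (k + 1) ^ 2 = N2 := rfl
  set q1 : ℕ → ℝ := fun k => |((ℓ + k + 1 : ℕ) : ℝ) * a (ℓ + k + 1)| * |χ (ℓ + k + 1)| with hq1d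
  set q2 : ℕ → ℝ := fun k => |((ℓ + k + 1 : ℕ) : ℝ) * a (ℓ + k + 1)| * |χ (k + 1)| with hq2d
  set q3 : ℕ → ℝ := fun k => |((k + 1 : ℕ) : ℝ) * a (k + 1)| * |χ (ℓ + k + 1)| with hq3d
  set q4 : ℕ → ℝ := fun k => |((k + 1 : ℕ) : ℝ) * a (k + 1)| * |χ (k + 1)| with hq4d
  have sq1 : Summable q1 := my_summable_absmul _ _ hu2 hχ2sh
  have sq2 : Summable q2 := my_summable_absmul _ _ hu2 hχ2
  have sq3 : Summable q3 := my_summable_absmul _ _ hu1 hχ2sh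
  have sq4 : Summable q4 := my_summable_absmul _ _ hu1 hχ2
  have hq1 : ∑' k, q1 k ≤ A * nχ := by
    refine (my_tsum_cs _ _ hu2 hχ2sh).trans ?_
    exact mul_le_mul (Real.sqrt_le_sqrt hTsh) (Real.sqrt_le_sqrt hNsh) (Real.sqrt_nonneg _) hA0
  have hq2 : ∑' k, q2 k ≤ A * nχ := by
    refine (my_tsum_cs _ _ hu2 hχ2).trans ?_
    rw [hNe]
    exact mul_le_mul (Real.sqrt_le_sqrt hTsh) le_rfl hn0 hA0
  have hq3 : ∑' k, q3 k ≤ A * nχ := by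
    refine (my_tsum_cs _ _ hu1 hχ2sh).trans ?_
    rw [hTe]
    exact mul_le_mul le_rfl (Real.sqrt_le_sqrt hNsh) (Real.sqrt_nonneg _) hA0
  have hq4 : ∑' k, q4 k ≤ A * nχ := by
    refine (my_tsum_cs _ _ hu1 hχ2).trans ?_
    rw [hTe, hNe]
  have hptw : ∀ k, |(((ℓ + k + 1 : ℕ) : ℝ) * a (ℓ + k + 1) - ((k + 1 : ℕ) : ℝ) * a (k + 1))
      * χ (ℓ + k + 1) * χ (k + 1)| ≤ D * (q1 k + q2 k + q3 k + q4 k) := by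
    intro k
    have hp := hpair (ℓ + k + 1) (k + 1) (by omega) (by omega) (Or.inr (by omega))
    have h1 : |(((ℓ + k + 1 : ℕ) : ℝ) * a (ℓ + k + 1) - ((k + 1 : ℕ) : ℝ) * a (k + 1))
        * χ (ℓ + k + 1) * χ (k + 1)|
        = |((ℓ + k + 1 : ℕ) : ℝ) * a (ℓ + k + 1) - ((k + 1 : ℕ) : ℝ) * a (k + 1)|
          * (|χ (ℓ + k + 1)| * |χ (k + 1)|) := by
      rw [abs_mul, abs_mul]; ring
    rw [h1]
    have h2 : |((ℓ + k + 1 : ℕ) : ℝ) * a (ℓ + k + 1) - ((k + 1 : ℕ) : ℝ) * a (k + 1)|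
        ≤ |((ℓ + k + 1 : ℕ) : ℝ) * a (ℓ + k + 1)| + |((k + 1 : ℕ) : ℝ) * a (k + 1)| :=
      abs_sub _ _
    calc |((ℓ + k + 1 : ℕ) : ℝ) * a (ℓ + k + 1) - ((k + 1 : ℕ) : ℝ) * a (k + 1)|
          * (|χ (ℓ + k + 1)| * |χ (k + 1)|)
        ≤ (|((ℓ + k + 1 : ℕ) : ℝ) * a (ℓ + k + 1)| + |((k + 1 : ℕ) : ℝ) * a (k + 1)|)
          * (D * (|χ (ℓ + k + 1)| + |χ (k + 1)|)) := by
          refine mul_le_mul h2 hp (mul_nonneg (abs_nonneg _) (abs_nonneg _)) ?_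
          positivity
      _ = D * (q1 k + q2 k + q3 k + q4 k) := by
          simp only [hq1d, hq2d, hq3d, hq4d]; ring
  have habs : Summable fun k => |(((ℓ + k + 1 : ℕ) : ℝ) * a (ℓ + k + 1)
      - ((k + 1 : ℕ) : ℝ) * a (k + 1)) * χ (ℓ + k + 1) * χ (k + 1)| := hsumm.abs
  have htail : |∑' k, (((ℓ + k + 1 : ℕ) : ℝ) * a (ℓ + k + 1)
      - ((k + 1 : ℕ) : ℝ) * a (k + 1)) * χ (ℓ + k + 1) * χ (k + 1)| ≤ 4 * A * D * nχ := by
    have hrhs : Summable fun k => D * (q1 k + q2 k + q3 k + q4 k) :=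
      (((sq1.add sq2).add sq3).add sq4).mul_left D
    calc |∑' k, (((ℓ + k + 1 : ℕ) : ℝ) * a (ℓ + k + 1)
          - ((k + 1 : ℕ) : ℝ) * a (k + 1)) * χ (ℓ + k + 1) * χ (k + 1)|
        ≤ ∑' k, |(((ℓ + k + 1 : ℕ) : ℝ) * a (ℓ + k + 1)
          - ((k + 1 : ℕ) : ℝ) * a (k + 1)) * χ (ℓ + k + 1) * χ (k + 1)| := by
          exact my_abs_tsum (fun k : ℕ =>
            (((ℓ + k + 1 : ℕ) : ℝ) * a (ℓ + k + 1) - ((k + 1 : ℕ) : ℝ) * a (k + 1))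
              * χ (ℓ + k + 1) * χ (k + 1)) habs
      _ ≤ ∑' k, D * (q1 k + q2 k + q3 k + q4 k) := Summable.tsum_le_tsum hptw habs hrhs
      _ = D * ((∑' k, q1 k) + (∑' k, q2 k) + (∑' k, q3 k) + (∑' k, q4 k)) := by
          rw [tsum_mul_left, Summable.tsum_add ((sq1.add sq2).add sq3) sq4,
            Summable.tsum_add (sq1.add sq2) sq3, Summable.tsum_add sq1 sq2]
      _ ≤ D * (A * nχ + A * nχ + A * nχ + A * nχ) := by
          refine mul_le_mul_of_nonneg_left ?_ hD
          exact add_le_add (add_le_add (add_le_add hq1 hq2) hq3) hq4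
      _ = 4 * A * D * nχ := by ring
  -- conclusion
  have hls : (ℓ : ℝ) * |2 - κ * a ℓ| * |χ ℓ| = |(ℓ : ℝ) * (2 - κ * a ℓ) * χ ℓ| := by
    rw [abs_mul, abs_mul, Nat.abs_cast]
  rw [hls, heq]
  calc |κ * ∑ j ∈ Finset.Ico 1 ℓ, (j : ℝ) * a j * χ j * χ (ℓ - j)
        + κ * ∑' k, (((ℓ + k + 1 : ℕ) : ℝ) * a (ℓ + k + 1)
          - ((k + 1 : ℕ) : ℝ) * a (k + 1)) * χ (ℓ + k + 1) * χ (k + 1)|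
      ≤ |κ * ∑ j ∈ Finset.Ico 1 ℓ, (j : ℝ) * a j * χ j * χ (ℓ - j)|
        + |κ * ∑' k, (((ℓ + k + 1 : ℕ) : ℝ) * a (ℓ + k + 1)
          - ((k + 1 : ℕ) : ℝ) * a (k + 1)) * χ (ℓ + k + 1) * χ (k + 1)| := abs_add_le _ _
    _ = κ * |∑ j ∈ Finset.Ico 1 ℓ, (j : ℝ) * a j * χ j * χ (ℓ - j)|
        + κ * |∑' k, (((ℓ + k + 1 : ℕ) : ℝ) * a (ℓ + k + 1)
          - ((k + 1 : ℕ) : ℝ) * a (k + 1)) * χ (ℓ + k + 1) * χ (k + 1)| := by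
        rw [abs_mul, abs_mul, abs_of_nonneg hκ]
    _ ≤ κ * (2 * A * D * nχ) + κ * (4 * A * D * nχ) :=
        add_le_add (mul_le_mul_of_nonneg_left hconv hκ)
          (mul_le_mul_of_nonneg_left htail hκ)
    _ = κ * 6 * A * D * nχ := by ring

set_option maxHeartbeats 1000000 in
/-- `g`-periodicity of small solutions around `κ = 2/a_m` when the set
`S = {ℓ ≥ 1 : a_ℓ = a_m}` has `gcd(S) = g > 1`. -/
theorem g_periodicity_of_solutions
    (a : ℕ → ℝ)
    (hsum : Summable fun j : ℕ => ((j + 1 : ℕ) : ℝ) ^ 2 * a (j + 1) ^ 2)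
    (m : ℕ) (hm : 1 ≤ m) (hma : 0 < a m)
    (S : Finset ℕ) (hS : ∀ ℓ : ℕ, ℓ ∈ S ↔ 1 ≤ ℓ ∧ a ℓ = a m)
    (g : ℕ) (hg : g = S.gcd id) (hg1 : 1 < g) :
    ∀ C : ℝ, 0 < C → ∃ δ' : ℝ, 0 < δ' ∧ ∃ η' : ℝ, 0 < η' ∧
      ∀ κ : ℝ, 2 / a m - δ' ≤ κ → κ ≤ 2 / a m + δ' →
        ∀ χ : ℕ → ℝ, Summable (fun ℓ : ℕ => χ (ℓ + 1) ^ 2) →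
          SolvesMV a κ χ →
          (∀ ℓ : ℕ, 1 ≤ ℓ → |χ ℓ| ≤ C * ∑ k ∈ S, |χ k|) →
          (∑ k ∈ S, |χ k|) ≤ η' →
          ∀ ℓ : ℕ, 1 ≤ ℓ → ¬ g ∣ ℓ → χ ℓ = 0 := by
  classical
  intro C hC
  have hsa : Summable fun i : ℕ => (((i + 1 : ℕ) : ℝ) * a (i + 1)) ^ 2 := by
    have he : (fun i : ℕ => (((i + 1 : ℕ) : ℝ) * a (i + 1)) ^ 2)
        = fun j : ℕ => ((j + 1 : ℕ) : ℝ) ^ 2 * a (j + 1) ^ 2 := by funext i; ring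
    rw [he]; exact hsum
  -- the constant A
  obtain ⟨A, hA0, hAs, haA⟩ : ∃ A : ℝ, 0 ≤ A ∧
      Real.sqrt (∑' i : ℕ, (((i + 1 : ℕ) : ℝ) * a (i + 1)) ^ 2) = A ∧
      ∀ j : ℕ, 1 ≤ j → |a j| ≤ A := by
    refine ⟨Real.sqrt (∑' i : ℕ, (((i + 1 : ℕ) : ℝ) * a (i + 1)) ^ 2),
      Real.sqrt_nonneg _, rfl, ?_⟩
    intro j hj
    have h1 : ((j : ℝ) * a j) ^ 2 ≤ ∑' i : ℕ, (((i + 1 : ℕ) : ℝ) * a (i + 1)) ^ 2 := by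
      have h2 := Summable.le_tsum hsa (j - 1) (fun i _ => sq_nonneg _)
      have e : j - 1 + 1 = j := by omega
      rw [e] at h2; exact h2
    have h3 : |(j : ℝ) * a j| ≤ Real.sqrt (∑' i : ℕ, (((i + 1 : ℕ) : ℝ) * a (i + 1)) ^ 2) :=
      Real.abs_le_sqrt h1
    have h4 : (1 : ℝ) ≤ (j : ℝ) := by exact_mod_cast hj
    have h5 : (j : ℝ) * |a j| = |(j : ℝ) * a j| := by rw [abs_mul, Nat.abs_cast]
    nlinarith [abs_nonneg (a j)]
  -- the gap c0
  obtain ⟨c0, hc0pos, hc0⟩ : ∃ c0 : ℝ, 0 < c0 ∧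
      ∀ ℓ, 1 ≤ ℓ → ℓ ∉ S → c0 ≤ |a m - a ℓ| := by
    have hma2 : (0 : ℝ) < a m / 2 := by linarith
    obtain ⟨N, hN⟩ : ∃ N : ℕ, ∀ ℓ : ℕ, N ≤ ℓ → 1 ≤ ℓ → |a ℓ| < a m / 2 := by
      have htend : Filter.Tendsto (fun j : ℕ => ((j + 1 : ℕ) : ℝ) ^ 2 * a (j + 1) ^ 2)
          atTop (𝓝 0) := hsum.tendsto_atTop_zero
      have hev := htend.eventually_lt_const (show (0:ℝ) < (a m / 2) ^ 2 by positivity)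
      obtain ⟨N0, hN0⟩ := Filter.eventually_atTop.1 hev
      refine ⟨N0 + 1, fun ℓ hℓ h1 => ?_⟩
      have h2 := hN0 (ℓ - 1) (by omega)
      have e : ℓ - 1 + 1 = ℓ := by omega
      rw [e] at h2
      have hone : (1 : ℝ) ≤ ((ℓ : ℕ) : ℝ) := by exact_mod_cast h1
      have hone2 : (1 : ℝ) ≤ ((ℓ : ℕ) : ℝ) ^ 2 := by nlinarith
      have hsq : a ℓ ^ 2 ≤ ((ℓ : ℕ) : ℝ) ^ 2 * a ℓ ^ 2 := by nlinarith [sq_nonneg (a ℓ)]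
      have habs2 : |a ℓ| ^ 2 < (a m / 2) ^ 2 := by rw [sq_abs]; linarith
      nlinarith [abs_nonneg (a ℓ)]
    set t : Finset ℕ := (Finset.range N).filter (fun ℓ => 1 ≤ ℓ ∧ ℓ ∉ S) with htd
    have ht : ∀ ℓ ∈ t, 0 < |a m - a ℓ| := by
      intro ℓ hℓ
      simp only [htd, Finset.mem_filter, Finset.mem_range] at hℓ
      have hne : a ℓ ≠ a m := fun h => hℓ.2.2 ((hS ℓ).2 ⟨hℓ.2.1, h⟩)
      exact abs_pos.2 (sub_ne_zero.2 (Ne.symm hne))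
    set c1 : ℝ := if h : t.Nonempty then t.inf' h (fun ℓ => |a m - a ℓ|) else 1 with hc1
    have hc1pos : 0 < c1 := by
      rw [hc1]; split_ifs with h
      · exact (Finset.lt_inf'_iff h).2 (fun ℓ hℓ => ht ℓ hℓ)
      · norm_num
    refine ⟨min (a m / 2) c1, lt_min hma2 hc1pos, ?_⟩
    intro ℓ h1 hnS
    by_cases hcase : ℓ < N
    · have hmem : ℓ ∈ t := by
        simp only [htd, Finset.mem_filter, Finset.mem_range]
        exact ⟨hcase, h1, hnS⟩
      calc min (a m / 2) c1 ≤ c1 := min_le_right _ _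
        _ ≤ |a m - a ℓ| := by
            rw [hc1, dif_pos ⟨ℓ, hmem⟩]; exact Finset.inf'_le _ hmem
    · have h2 := hN ℓ (by omega) h1
      have h3 : a ℓ < a m / 2 := lt_of_abs_lt h2
      calc min (a m / 2) c1 ≤ a m / 2 := min_le_left _ _
        _ ≤ a m - a ℓ := by linarith
        _ ≤ |a m - a ℓ| := le_abs_self _
  -- δ'
  obtain ⟨δ', hδpos, hδ1, hδ2⟩ : ∃ δ' : ℝ, 0 < δ' ∧ δ' ≤ 1 / a m ∧ δ' * A ≤ c0 / a m := by
    refine ⟨min (1 / a m) (c0 / (a m * (A + 1))), ?_, min_le_left _ _, ?_⟩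
    · exact lt_min (by positivity) (by positivity)
    · have h1 : min (1 / a m) (c0 / (a m * (A + 1))) ≤ c0 / (a m * (A + 1)) := min_le_right _ _
      have h2 : c0 / (a m * (A + 1)) * A ≤ c0 / a m := by
        rw [div_mul_eq_mul_div, div_le_div_iff₀ (by positivity) hma]
        nlinarith
      calc min (1 / a m) (c0 / (a m * (A + 1))) * A
          ≤ c0 / (a m * (A + 1)) * A := mul_le_mul_of_nonneg_right h1 hA0
        _ ≤ c0 / a m := h2
  refine ⟨δ', hδpos, ?_⟩
  -- c and Kc
  obtain ⟨c, hcpos, hceq⟩ : ∃ c : ℝ, 0 < c ∧ c = c0 / a m := ⟨c0 / a m, by positivity, rfl⟩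
  obtain ⟨Kc, hKcpos, hKcge⟩ : ∃ Kc : ℝ, 0 < Kc ∧ 18 * A / (c * a m) ≤ Kc := by
    refine ⟨18 * A / (c * a m) + 1, ?_, by linarith⟩
    have h1 : 0 ≤ 18 * A / (c * a m) := by
      apply div_nonneg (by linarith) (le_of_lt (mul_pos hcpos hma))
    linarith
  -- P
  have hPsum : Summable fun i : ℕ => (1 : ℝ) / ((i + 1 : ℕ) : ℝ) ^ 2 :=
    (summable_nat_add_iff 1).2 (summable_one_div_nat_pow.2 one_lt_two)
  obtain ⟨P, hP0, hPle⟩ : ∃ P : ℝ, 0 ≤ P ∧ ∑' i : ℕ, (1 : ℝ) / ((i + 1 : ℕ) : ℝ) ^ 2 ≤ P :=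
    ⟨_, tsum_nonneg (fun i => by positivity), le_rfl⟩
  -- B
  obtain ⟨B, hB0, hBcard⟩ : ∃ B : ℝ, 0 < B ∧ 2 * (S.card : ℝ) ≤ B ^ 2 := by
    refine ⟨(S.card : ℝ) + 1, by positivity, ?_⟩
    have := Nat.cast_nonneg (α := ℝ) S.card
    nlinarith
  -- η'
  obtain ⟨η', hηpos, hη1, hηa, hηb⟩ : ∃ η' : ℝ, 0 < η' ∧ η' ≤ 1 ∧
      (Kc * C + 1) ^ 2 * η' * P ≤ 1 / 2 ∧ (Kc * B + 1) * η' ≤ 1 / 2 := by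
    have hX : (0 : ℝ) < Kc * C + 1 := by nlinarith [mul_pos hKcpos hC]
    have hX2 : (0 : ℝ) < (Kc * C + 1) ^ 2 := by positivity
    have hY : (0 : ℝ) < P + 1 := by linarith
    have hZ : (0 : ℝ) < Kc * B + 1 := by nlinarith [mul_pos hKcpos hB0]
    refine ⟨min 1 (min (1 / (2 * (Kc * C + 1) ^ 2 * (P + 1))) (1 / (2 * (Kc * B + 1)))),
      ?_, min_le_left _ _, ?_, ?_⟩
    · refine lt_min one_pos (lt_min ?_ ?_)
      · apply one_div_pos.2; nlinarith
      · apply one_div_pos.2; linarith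
    · have h1 : min 1 (min (1 / (2 * (Kc * C + 1) ^ 2 * (P + 1))) (1 / (2 * (Kc * B + 1))))
          ≤ 1 / (2 * (Kc * C + 1) ^ 2 * (P + 1)) :=
        le_trans (min_le_right _ _) (min_le_left _ _)
      have h2 : (Kc * C + 1) ^ 2 * (1 / (2 * (Kc * C + 1) ^ 2 * (P + 1))) * P
          = P / (2 * (P + 1)) := by
        field_simp
      have h3 : P / (2 * (P + 1)) ≤ 1 / 2 := by
        rw [div_le_div_iff₀ (by linarith) (by norm_num)]
        linarith
      have h4 : (Kc * C + 1) ^ 2 * min 1 (min (1 / (2 * (Kc * C + 1) ^ 2 * (P + 1)))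
          (1 / (2 * (Kc * B + 1)))) * P
          ≤ (Kc * C + 1) ^ 2 * (1 / (2 * (Kc * C + 1) ^ 2 * (P + 1))) * P := by
        have := mul_le_mul_of_nonneg_left h1 (le_of_lt hX2)
        exact mul_le_mul_of_nonneg_right this hP0
      linarith
    · have h1 : min 1 (min (1 / (2 * (Kc * C + 1) ^ 2 * (P + 1))) (1 / (2 * (Kc * B + 1))))
          ≤ 1 / (2 * (Kc * B + 1)) :=
        le_trans (min_le_right _ _) (min_le_right _ _)
      have h2 : (Kc * B + 1) * (1 / (2 * (Kc * B + 1))) = 1 / 2 := by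
        field_simp
      have h4 := mul_le_mul_of_nonneg_left h1 (le_of_lt hZ)
      linarith
  refine ⟨η', hηpos, ?_⟩
  intro κ hκ1 hκ2 χ hχ hsol hbound hsmall
  -- κ bounds
  have hκpos : 0 < κ := by
    have h2 : 0 < 1 / a m := by positivity
    have h3 : 1 / a m + 1 / a m = 2 / a m := by ring
    linarith
  have hκ3 : κ ≤ 3 / a m := by
    have h3 : 2 / a m + 1 / a m = 3 / a m := by ring
    linarith
  -- multiplier bound off S
  have hmult : ∀ ℓ : ℕ, 1 ≤ ℓ → ℓ ∉ S → c ≤ |2 - κ * a ℓ| := by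
    intro ℓ h1 hnS
    have h2 := hc0 ℓ h1 hnS
    have hX : 2 / a m * c0 ≤ |2 / a m * (a m - a ℓ)| := by
      rw [abs_mul, abs_of_pos (show (0:ℝ) < 2 / a m by positivity)]
      exact mul_le_mul_of_nonneg_left h2 (by positivity)
    have hY : |(2 / a m - κ) * a ℓ| ≤ c0 / a m := by
      rw [abs_mul]
      have h3 : |2 / a m - κ| ≤ δ' := abs_le.2 ⟨by linarith, by linarith⟩
      have h4 : |a ℓ| ≤ A := haA ℓ h1
      calc |2 / a m - κ| * |a ℓ| ≤ δ' * A :=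
            mul_le_mul h3 h4 (abs_nonneg _) (le_of_lt hδpos)
        _ ≤ c0 / a m := hδ2
    have h5 : |2 / a m * (a m - a ℓ)| ≤ |2 - κ * a ℓ| + |(2 / a m - κ) * a ℓ| := by
      have h6 := abs_add_le (2 - κ * a ℓ) (-((2 / a m - κ) * a ℓ))
      have e2 : 2 - κ * a ℓ + -((2 / a m - κ) * a ℓ) = 2 / a m * (a m - a ℓ) := by
        field_simp
        ring
      rw [e2, abs_neg] at h6
      exact h6
    have h7 : 2 / a m * c0 - c0 / a m = c := by rw [hceq]; ring
    linarith
  -- opaque ε, N2, nχ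
  obtain ⟨ε, hε0, hεd⟩ : ∃ ε : ℝ, 0 ≤ ε ∧ (∑ k ∈ S, |χ k|) = ε :=
    ⟨_, Finset.sum_nonneg fun k _ => abs_nonneg _, rfl⟩
  obtain ⟨N2, hN2nn, hN2d⟩ : ∃ N2 : ℝ, 0 ≤ N2 ∧ (∑' i : ℕ, χ (i + 1) ^ 2) = N2 :=
    ⟨_, tsum_nonneg fun i => sq_nonneg _, rfl⟩
  obtain ⟨nχ, hnχ0, hnsq, hnpow⟩ : ∃ nχ : ℝ, 0 ≤ nχ ∧
      Real.sqrt (∑' i : ℕ, χ (i + 1) ^ 2) = nχ ∧ nχ ^ 2 = N2 := by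
    refine ⟨Real.sqrt (∑' i : ℕ, χ (i + 1) ^ 2), Real.sqrt_nonneg _, rfl, ?_⟩
    rw [Real.sq_sqrt (tsum_nonneg fun i => sq_nonneg _), hN2d]
  rw [hεd] at hbound hsmall
  have hχS : ∀ k ∈ S, |χ k| ≤ ε := by
    intro k hk
    calc |χ k| ≤ ∑ i ∈ S, |χ i| :=
          Finset.single_le_sum (f := fun i => |χ i|) (fun i _ => abs_nonneg _) hk
      _ = ε := hεd
  -- generic pointwise bound off S
  have hout : ∀ ℓ : ℕ, 1 ≤ ℓ → ℓ ∉ S → ∀ D : ℝ, 0 ≤ D →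
      (∀ p q : ℕ, 1 ≤ p → 1 ≤ q → (p + q = ℓ ∨ p = q + ℓ) →
        |χ p| * |χ q| ≤ D * (|χ p| + |χ q|)) →
      |χ ℓ| ≤ Kc * D * nχ / (ℓ : ℝ) := by
    intro ℓ h1 hnS D hD hp
    have hkey := key_estimate a κ (le_of_lt hκpos) χ hsa hχ hsol D hD ℓ h1 hp
    rw [hAs, hnsq] at hkey
    have hl1 : (1 : ℝ) ≤ (ℓ : ℝ) := by exact_mod_cast h1
    have hlpos : (0 : ℝ) < (ℓ : ℝ) := by linarith
    have hc2 := hmult ℓ h1 hnS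
    have hstep1 : (ℓ : ℝ) * c * |χ ℓ| ≤ κ * 6 * A * D * nχ := by
      have h2 := mul_le_mul_of_nonneg_right hc2
        (mul_nonneg (le_of_lt hlpos) (abs_nonneg (χ ℓ)))
      linarith [hkey]
    have h6 : κ * 6 * A ≤ Kc * c := by
      have h7 : κ * 6 * A ≤ 3 / a m * 6 * A := by
        have h7' := mul_le_mul_of_nonneg_right hκ3 hA0
        linarith
      have h8 : 18 * A / (c * a m) * c ≤ Kc * c :=
        mul_le_mul_of_nonneg_right hKcge (le_of_lt hcpos)
      have h9 : 3 / a m * 6 * A = 18 * A / (c * a m) * c := by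
        field_simp
        ring
      linarith
    have hstep2 : (ℓ : ℝ) * c * |χ ℓ| ≤ Kc * c * D * nχ := by
      have h6' := mul_le_mul_of_nonneg_right h6 (mul_nonneg hD hnχ0)
      linarith [hstep1]
    rw [le_div_iff₀ hlpos]
    have h10 : |χ ℓ| * (ℓ : ℝ) * c ≤ Kc * D * nχ * c := by linarith [hstep2]
    exact le_of_mul_le_mul_right (by linarith [h10]) hcpos
  -- norm contraction
  have hCε : 0 ≤ C * ε := mul_nonneg (le_of_lt hC) hε0
  have houtS : ∀ ℓ : ℕ, 1 ≤ ℓ → ℓ ∉ S → |χ ℓ| ≤ Kc * (C * ε) * nχ / (ℓ : ℝ) := by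
    intro ℓ h1 hnS
    refine hout ℓ h1 hnS (C * ε) hCε ?_
    intro p q hp hq _
    have h2 := hbound q hq
    have h3 : |χ p| * |χ q| ≤ |χ p| * (C * ε) := mul_le_mul_of_nonneg_left h2 (abs_nonneg _)
    linarith [mul_nonneg hCε (abs_nonneg (χ p)), mul_nonneg hCε (abs_nonneg (χ q))]
  have hsummand : ∀ i : ℕ, χ (i + 1) ^ 2 ≤
      (if (i + 1) ∈ S then ε ^ 2 else 0) +
        (Kc * (C * ε) * nχ) ^ 2 * (1 / ((i + 1 : ℕ) : ℝ) ^ 2) := by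
    intro i
    have hq0 : (0:ℝ) ≤ (Kc * (C * ε) * nχ) ^ 2 * (1 / ((i + 1 : ℕ) : ℝ) ^ 2) := by positivity
    by_cases hi : (i + 1) ∈ S
    · rw [if_pos hi]
      have h2 := hχS _ hi
      have h3 : χ (i + 1) ^ 2 ≤ ε ^ 2 := by
        have h3' := pow_le_pow_left₀ (abs_nonneg (χ (i + 1))) h2 2
        rwa [sq_abs] at h3'
      linarith
    · rw [if_neg hi]
      have h2 := houtS (i + 1) (by omega) hi
      have h4 : |χ (i + 1)| ^ 2 ≤ (Kc * (C * ε) * nχ / ((i + 1 : ℕ) : ℝ)) ^ 2 :=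
        pow_le_pow_left₀ (abs_nonneg _) h2 2
      have h5 : (Kc * (C * ε) * nχ / ((i + 1 : ℕ) : ℝ)) ^ 2
          = (Kc * (C * ε) * nχ) ^ 2 * (1 / ((i + 1 : ℕ) : ℝ) ^ 2) := by
        ring
      rw [sq_abs, h5] at h4
      linarith
  have hind : Summable fun i : ℕ => (if (i + 1) ∈ S then ε ^ 2 else (0:ℝ)) := by
    apply summable_of_ne_finset_zero (s := S.image (· - 1))
    intro b hb
    rw [if_neg]
    intro hbS
    exact hb (Finset.mem_image.2 ⟨b + 1, hbS, by omega⟩)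
  have hPs2 : Summable fun i : ℕ => (Kc * (C * ε) * nχ) ^ 2 * (1 / ((i + 1 : ℕ) : ℝ) ^ 2) :=
    hPsum.mul_left _
  have h7 : N2 ≤ (∑' i : ℕ, (if (i + 1) ∈ S then ε ^ 2 else (0:ℝ)))
      + (Kc * (C * ε) * nχ) ^ 2 * ∑' i : ℕ, (1 / ((i + 1 : ℕ) : ℝ) ^ 2) := by
    rw [← hN2d]
    calc ∑' i : ℕ, χ (i + 1) ^ 2 ≤ ∑' i : ℕ, ((if (i + 1) ∈ S then ε ^ 2 else 0) +
          (Kc * (C * ε) * nχ) ^ 2 * (1 / ((i + 1 : ℕ) : ℝ) ^ 2)) :=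
        Summable.tsum_le_tsum hsummand hχ (hind.add hPs2)
      _ = _ := by rw [Summable.tsum_add hind hPs2, tsum_mul_left]
  have h8 : ∑' i : ℕ, (if (i + 1) ∈ S then ε ^ 2 else (0:ℝ)) ≤ (S.card : ℝ) * ε ^ 2 := by
    have hz : ∀ b ∉ S.image (· - 1), (if (b + 1) ∈ S then ε ^ 2 else (0:ℝ)) = 0 := by
      intro b hb
      rw [if_neg]
      intro hbS
      exact hb (Finset.mem_image.2 ⟨b + 1, hbS, by omega⟩)
    rw [tsum_eq_sum hz]
    calc ∑ i ∈ S.image (· - 1), (if (i + 1) ∈ S then ε ^ 2 else (0:ℝ))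
        ≤ ∑ _i ∈ S.image (· - 1), ε ^ 2 := Finset.sum_le_sum (fun i _ => by
          split_ifs
          · exact le_rfl
          · exact sq_nonneg ε)
      _ = ((S.image (· - 1)).card : ℝ) * ε ^ 2 := by rw [Finset.sum_const, nsmul_eq_mul]
      _ ≤ (S.card : ℝ) * ε ^ 2 := by
          have h10 : ((S.image (· - 1)).card : ℝ) ≤ (S.card : ℝ) := by
            exact_mod_cast Finset.card_image_le
          nlinarith [sq_nonneg ε]
  have hquad : (Kc * (C * ε) * nχ) ^ 2 * (∑' i : ℕ, 1 / ((i + 1 : ℕ) : ℝ) ^ 2) ≤ N2 / 2 := by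
    have hε1 : ε ≤ 1 := le_trans hsmall hη1
    have hKC : 0 ≤ Kc * C := le_of_lt (mul_pos hKcpos hC)
    have h11 : (Kc * (C * ε)) ^ 2 ≤ (Kc * C + 1) ^ 2 * ε := by
      have e1 : ε ^ 2 ≤ ε := by
        have := mul_le_mul_of_nonneg_right hε1 hε0
        nlinarith [this]
      have e2 : (Kc * C) ^ 2 ≤ (Kc * C + 1) ^ 2 := by nlinarith [hKC]
      calc (Kc * (C * ε)) ^ 2 = (Kc * C) ^ 2 * ε ^ 2 := by ring
        _ ≤ (Kc * C) ^ 2 * ε := mul_le_mul_of_nonneg_left e1 (sq_nonneg _)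
        _ ≤ (Kc * C + 1) ^ 2 * ε := mul_le_mul_of_nonneg_right e2 hε0
    have h13 : (Kc * C + 1) ^ 2 * ε * P ≤ (Kc * C + 1) ^ 2 * η' * P :=
      mul_le_mul_of_nonneg_right (mul_le_mul_of_nonneg_left hsmall (sq_nonneg _)) hP0
    have h14 : (Kc * (C * ε)) ^ 2 * P ≤ (Kc * C + 1) ^ 2 * ε * P :=
      mul_le_mul_of_nonneg_right h11 hP0
    have hb1 : (Kc * (C * ε)) ^ 2 * P ≤ 1 / 2 := by linarith
    calc (Kc * (C * ε) * nχ) ^ 2 * (∑' i : ℕ, 1 / ((i + 1 : ℕ) : ℝ) ^ 2)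
        ≤ (Kc * (C * ε) * nχ) ^ 2 * P := mul_le_mul_of_nonneg_left hPle (sq_nonneg _)
      _ = (Kc * (C * ε)) ^ 2 * P * nχ ^ 2 := by ring
      _ ≤ 1 / 2 * nχ ^ 2 := mul_le_mul_of_nonneg_right hb1 (sq_nonneg _)
      _ = N2 / 2 := by rw [hnpow]; ring
  have hN2le : N2 ≤ 2 * (S.card : ℝ) * ε ^ 2 := by linarith
  have hnB : nχ ≤ B * ε := by
    have h10 : nχ ^ 2 ≤ (B * ε) ^ 2 := by
      calc nχ ^ 2 = N2 := hnpow
        _ ≤ 2 * (S.card : ℝ) * ε ^ 2 := hN2le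
        _ ≤ B ^ 2 * ε ^ 2 := mul_le_mul_of_nonneg_right hBcard (sq_nonneg ε)
        _ = (B * ε) ^ 2 := by ring
    have h11 := Real.sqrt_le_sqrt h10
    rwa [Real.sqrt_sq hnχ0, Real.sqrt_sq (mul_nonneg (le_of_lt hB0) hε0)] at h11
  -- the sup over non-multiples of g
  have hgn1 : ¬ g ∣ 1 := by
    intro h
    have := Nat.le_of_dvd one_pos h
    omega
  have hbdd : BddAbove {x : ℝ | ∃ n : ℕ, 1 ≤ n ∧ ¬ g ∣ n ∧ x = |χ n|} := by
    refine ⟨C * ε, ?_⟩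
    rintro x ⟨n, hn1, -, rfl⟩
    exact hbound n hn1
  have hne : {x : ℝ | ∃ n : ℕ, 1 ≤ n ∧ ¬ g ∣ n ∧ x = |χ n|}.Nonempty :=
    ⟨|χ 1|, 1, le_rfl, hgn1, rfl⟩
  obtain ⟨M, hMd⟩ : ∃ M : ℝ, M = sSup {x : ℝ | ∃ n : ℕ, 1 ≤ n ∧ ¬ g ∣ n ∧ x = |χ n|} :=
    ⟨_, rfl⟩
  have hMle : ∀ n : ℕ, 1 ≤ n → ¬ g ∣ n → |χ n| ≤ M := by
    intro n h1 h2
    rw [hMd]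
    exact le_csSup hbdd ⟨n, h1, h2, rfl⟩
  have hM0 : 0 ≤ M := le_trans (abs_nonneg (χ 1)) (hMle 1 le_rfl hgn1)
  have hSg : ∀ k ∈ S, g ∣ k := by
    intro k hk
    rw [hg]
    exact Finset.gcd_dvd hk
  have hstep : ∀ n : ℕ, 1 ≤ n → ¬ g ∣ n → |χ n| ≤ M / 2 := by
    intro n h1 hnd
    have hnS : n ∉ S := fun hmem => hnd (hSg n hmem)
    have hpair : ∀ p q : ℕ, 1 ≤ p → 1 ≤ q → (p + q = n ∨ p = q + n) →
        |χ p| * |χ q| ≤ M * (|χ p| + |χ q|) := by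
      intro p q hp hq hpq
      have hdvd : ¬ g ∣ p ∨ ¬ g ∣ q := by
        by_contra hcon
        push_neg at hcon
        apply hnd
        rcases hpq with h | h
        · rw [← h]; exact Nat.dvd_add hcon.1 hcon.2
        · have h2 : g ∣ p - q := Nat.dvd_sub hcon.1 hcon.2
          have e : p - q = n := by omega
          rwa [e] at h2
      rcases hdvd with h | h
      · have h3 := hMle p hp h
        have h4 : |χ p| * |χ q| ≤ M * |χ q| := mul_le_mul_of_nonneg_right h3 (abs_nonneg _)
        linarith [mul_nonneg hM0 (abs_nonneg (χ p))]
      · have h3 := hMle q hq h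
        have h4 : |χ p| * |χ q| ≤ |χ p| * M := mul_le_mul_of_nonneg_left h3 (abs_nonneg _)
        linarith [mul_nonneg hM0 (abs_nonneg (χ q))]
    have h2 := hout n h1 hnS M hM0 hpair
    have hl1 : (1 : ℝ) ≤ (n : ℝ) := by exact_mod_cast h1
    have h3 : Kc * M * nχ / (n : ℝ) ≤ Kc * M * nχ :=
      div_le_self (mul_nonneg (mul_nonneg (le_of_lt hKcpos) hM0) hnχ0) hl1
    have h4 : Kc * M * nχ ≤ Kc * M * (B * ε) :=
      mul_le_mul_of_nonneg_left hnB (mul_nonneg (le_of_lt hKcpos) hM0)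
    have h5 : Kc * B * ε ≤ 1 / 2 := by
      have hZ : (0:ℝ) < Kc * B + 1 := by
        have := mul_pos hKcpos hB0
        linarith
      have h7 : Kc * B * ε ≤ (Kc * B + 1) * ε := by linarith [hε0]
      have h8 : (Kc * B + 1) * ε ≤ (Kc * B + 1) * η' :=
        mul_le_mul_of_nonneg_left hsmall (le_of_lt hZ)
      linarith [hηb]
    calc |χ n| ≤ Kc * M * nχ / (n : ℝ) := h2
      _ ≤ Kc * M * (B * ε) := le_trans h3 h4
      _ = M * (Kc * B * ε) := by ring
      _ ≤ M * (1 / 2) := mul_le_mul_of_nonneg_left h5 hM0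
      _ = M / 2 := by ring
  have hM2 : M ≤ M / 2 := by
    rw [hMd]
    refine csSup_le hne ?_
    rintro x ⟨n, h1, h2, rfl⟩
    have h3 := hstep n h1 h2
    rwa [hMd] at h3
  have hMz : M = 0 := le_antisymm (by linarith) hM0
  intro ℓ h1 h2
  have h3 := hMle ℓ h1 h2
  rw [hMz] at h3
  exact abs_eq_zero.1 (le_antisymm h3 (abs_nonneg _))
end
end

section
/- Let a_ℓ := 1/ℓ for every ℓ ≥ 1 (the log-sine potential W(θ) = −log(2 sin(θ/2))). Then a sequence x ∈ ℓ²_w solves the stationary Fourier system at κ > 0 if and only if (2ℓ − κ) x_ℓ = κ ∑_{j=1}^{ℓ−1} x_j x_{ℓ−j} for every ℓ ≥ 1 (the infinite sums vanish identically since j a_j − (j−ℓ) a_{j−ℓ} = 0). Consequently, if κ > 0 and κ ≠ 2ℓ for every ℓ ≥ 1, then the only x ∈ ℓ²_w solving the stationary Fourier system at κ is x = 0. -/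
open scoped BigOperators
open Filter Topology Real

noncomputable section

/-! When `ℓ a_ℓ` is a constant `c`, every tail coefficient `j a_j − (j−ℓ) a_{j−ℓ}` vanishes and
the stationary system becomes the triangular recursion `ℓ(2 − κ a_ℓ) x_ℓ = κ c ∑_{j<ℓ} x_j x_{ℓ−j}`.
For `a_ℓ = 1/ℓ` the diagonal coefficient is `2ℓ − κ`; if it never vanishes, strong induction on
`ℓ` shows that every `x_ℓ` is zero, since the right-hand side only involves `x_j` with `j < ℓ`. -/

section ConstantMoment

variable {a : ℕ → ℝ} {c : ℝ}

theorem tail_coeff_eq_zero (hc : ∀ n : ℕ, 1 ≤ n → (n : ℝ) * a n = c) (x : ℕ → ℝ) (ℓ : ℕ) :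
    (fun k : ℕ =>
      (((ℓ + k + 1 : ℕ) : ℝ) * a (ℓ + k + 1) - ((k + 1 : ℕ) : ℝ) * a (k + 1))
        * x (ℓ + k + 1) * x (k + 1)) = fun _ => 0 := by
  funext k
  rw [hc (ℓ + k + 1) (by omega), hc (k + 1) (by omega), sub_self, zero_mul, zero_mul]

theorem solvesMV_iff_of_natCast_mul_eq (hc : ∀ n : ℕ, 1 ≤ n → (n : ℝ) * a n = c)
    (κ : ℝ) (x : ℕ → ℝ) :
    SolvesMV a κ x ↔ ∀ ℓ : ℕ, 1 ≤ ℓ →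
      (ℓ : ℝ) * (2 - κ * a ℓ) * x ℓ = κ * c * ∑ j ∈ Finset.Ico 1 ℓ, x j * x (ℓ - j) := by
  have hconv (ℓ : ℕ) : ∑ j ∈ Finset.Ico 1 ℓ, (j : ℝ) * a j * x j * x (ℓ - j)
      = c * ∑ j ∈ Finset.Ico 1 ℓ, x j * x (ℓ - j) := by
    rw [Finset.mul_sum]
    refine Finset.sum_congr rfl fun j hj => ?_
    rw [hc j (Finset.mem_Ico.mp hj).1, mul_assoc]
  refine forall₂_congr fun ℓ _ => ?_
  simp only [tail_coeff_eq_zero hc x ℓ, summable_zero, tsum_zero, true_and, hconv]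
  ring_nf

end ConstantMoment

theorem natCast_mul_inv_natCast_eq_one {a : ℕ → ℝ} (ha : ∀ ℓ : ℕ, 1 ≤ ℓ → a ℓ = 1 / (ℓ : ℝ))
    (n : ℕ) (hn : 1 ≤ n) : (n : ℝ) * a n = 1 := by
  rw [ha n hn, mul_one_div_cancel (by exact_mod_cast (by omega : n ≠ 0))]

theorem eq_zero_of_mul_eq_convolution {d x : ℕ → ℝ} {κ : ℝ} (hd : ∀ ℓ : ℕ, 1 ≤ ℓ → d ℓ ≠ 0)
    (hx : ∀ ℓ : ℕ, 1 ≤ ℓ → d ℓ * x ℓ = κ * ∑ j ∈ Finset.Ico 1 ℓ, x j * x (ℓ - j)) :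
    ∀ ℓ : ℕ, 1 ≤ ℓ → x ℓ = 0 := by
  intro ℓ
  induction ℓ using Nat.strong_induction_on with
  | _ ℓ ih =>
    intro hℓ
    have hconv : ∑ j ∈ Finset.Ico 1 ℓ, x j * x (ℓ - j) = 0 :=
      Finset.sum_eq_zero fun j hj => by
        obtain ⟨hj1, hjℓ⟩ := Finset.mem_Ico.mp hj
        rw [ih j hjℓ hj1, zero_mul]
    have h := hx ℓ hℓ
    rw [hconv, mul_zero] at h
    exact (mul_eq_zero.mp h).resolve_left (hd ℓ hℓ)

/-- for the log-sine potential (`a_ℓ = 1/ℓ`), the stationary Fourier system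
reduces to `(2ℓ − κ) x_ℓ = κ ∑_{j<ℓ} x_j x_{ℓ−j}`; consequently, if `κ ∉ {2ℓ : ℓ ≥ 1}` the
only solution in `ℓ²_w` is `x = 0`. -/
theorem logsine_system_and_triviality
    (a : ℕ → ℝ) (ha : ∀ ℓ : ℕ, 1 ≤ ℓ → a ℓ = 1 / (ℓ : ℝ)) :
    (∀ κ : ℝ, 0 < κ → ∀ x : ℕ → ℝ, MemL2w x →
      (SolvesMV a κ x ↔
        ∀ ℓ : ℕ, 1 ≤ ℓ →
          (2 * (ℓ : ℝ) - κ) * x ℓ = κ * ∑ j ∈ Finset.Ico 1 ℓ, x j * x (ℓ - j))) ∧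
    (∀ κ : ℝ, 0 < κ → (∀ ℓ : ℕ, 1 ≤ ℓ → κ ≠ 2 * (ℓ : ℝ)) →
      ∀ x : ℕ → ℝ, MemL2w x → SolvesMV a κ x → ∀ ℓ : ℕ, 1 ≤ ℓ → x ℓ = 0) := by
  have hdiag (κ : ℝ) (ℓ : ℕ) (hℓ : 1 ≤ ℓ) : (ℓ : ℝ) * (2 - κ * a ℓ) = 2 * ℓ - κ := by
    rw [mul_sub, mul_left_comm, natCast_mul_inv_natCast_eq_one ha ℓ hℓ]
    ring
  have hsystem (κ : ℝ) (x : ℕ → ℝ) : SolvesMV a κ x ↔ ∀ ℓ : ℕ, 1 ≤ ℓ →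
      (2 * (ℓ : ℝ) - κ) * x ℓ = κ * ∑ j ∈ Finset.Ico 1 ℓ, x j * x (ℓ - j) := by
    rw [solvesMV_iff_of_natCast_mul_eq (natCast_mul_inv_natCast_eq_one ha)]
    refine forall₂_congr fun ℓ hℓ => ?_
    rw [hdiag κ ℓ hℓ, mul_one]
  refine ⟨fun κ _ x _ => hsystem κ x, fun κ _ hκ x _ hx => ?_⟩
  refine eq_zero_of_mul_eq_convolution (fun ℓ hℓ h => hκ ℓ hℓ ?_) ((hsystem κ x).mp hx)
  linarith
end
end

section
/- Let a_ℓ := 1/ℓ for every ℓ ≥ 1 (the log-sine potential W(θ) = −log(2 sin(θ/2))), let ℓ* ≥ 1 and set κ := 2ℓ*. Then a sequence x ∈ ℓ²_w solves the stationary Fourier system at κ if and only if there exists r ∈ (−1, 1) such that x_{kℓ*} = r^k for every k ≥ 1 and x_j = 0 whenever ℓ* does not divide j. (These are the Fourier cosine coefficients of the Poisson kernel with wave number ℓ*, P_{r,ℓ*}(θ) = (1−r²)/(1 − 2r cos(ℓ*θ) + r²).) -/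
open scoped BigOperators
open Filter Topology Real

noncomputable section

/-! Since `j a_j = 1`, every tail term vanishes and the system at `κ = 2L` becomes the recursion
`(ℓ - L) x_ℓ = L ∑_{j=1}^{ℓ-1} x_j x_{ℓ-j}`. It determines each `x_ℓ` from the earlier ones,
except `x_L =: r`, which is free. The Poisson coefficients (`r^k` at `kL`, zero elsewhere) solve
it because `∑_{m=1}^{k-1} r^m r^{k-m} = (k-1) r^k`, so they are the only solutions; finally
`x ∈ ℓ²_w` forces `r^k = x_{kL} → 0`, i.e. `|r| < 1`. -/

/-- The `ℓ`-th coefficient of `(∑_{j ≥ 1} x_j z^j)²`. -/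
def convSq (x : ℕ → ℝ) (ℓ : ℕ) : ℝ := ∑ j ∈ Finset.Ico 1 ℓ, x j * x (ℓ - j)

lemma convSq_congr {x y : ℕ → ℝ} {ℓ : ℕ} (h : ∀ j, 1 ≤ j → j < ℓ → x j = y j) :
    convSq x ℓ = convSq y ℓ := by
  refine Finset.sum_congr rfl fun j hj => ?_
  rw [Finset.mem_Ico] at hj
  rw [h j hj.1 hj.2, h (ℓ - j) (by omega) (by omega)]

def poissonCoeff (L : ℕ) (r : ℝ) (j : ℕ) : ℝ := if L ∣ j then r ^ (j / L) else 0

section poissonCoeff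

variable {L : ℕ} {r : ℝ}

lemma poissonCoeff_mul (hL : 1 ≤ L) (k : ℕ) : poissonCoeff L r (k * L) = r ^ k := by
  rw [poissonCoeff, if_pos (dvd_mul_left L k), Nat.mul_div_cancel k (by omega)]

lemma poissonCoeff_of_not_dvd {j : ℕ} (hj : ¬ L ∣ j) : poissonCoeff L r j = 0 := if_neg hj

lemma forall_eq_poissonCoeff_iff (hL : 1 ≤ L) (x : ℕ → ℝ) :
    (∀ j, 1 ≤ j → x j = poissonCoeff L r j) ↔
      (∀ k : ℕ, 1 ≤ k → x (k * L) = r ^ k) ∧ (∀ j : ℕ, 1 ≤ j → ¬ L ∣ j → x j = 0) := by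
  refine ⟨fun h => ⟨fun k hk => ?_, fun j hj hdvd => ?_⟩, fun ⟨hmul, hndvd⟩ j hj => ?_⟩
  · rw [h _ (Nat.one_le_iff_ne_zero.2 (Nat.mul_ne_zero (by omega) (by omega))),
      poissonCoeff_mul hL]
  · rw [h j hj, poissonCoeff_of_not_dvd hdvd]
  · by_cases hdvd : L ∣ j
    · obtain ⟨k, rfl⟩ := hdvd
      rw [mul_comm, hmul k (by rcases k with _ | k <;> simp_all), poissonCoeff_mul hL]
    · rw [hndvd j hj hdvd, poissonCoeff_of_not_dvd hdvd]

lemma convSq_poissonCoeff_of_not_dvd {ℓ : ℕ} (hℓ : ¬ L ∣ ℓ) :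
    convSq (poissonCoeff L r) ℓ = 0 := by
  refine Finset.sum_eq_zero fun j hj => ?_
  rw [Finset.mem_Ico] at hj
  by_cases hj' : L ∣ j
  · have : ¬ L ∣ ℓ - j := fun h => hℓ (by simpa [Nat.sub_add_cancel hj.2.le] using dvd_add h hj')
    rw [poissonCoeff_of_not_dvd this, mul_zero]
  · rw [poissonCoeff_of_not_dvd hj', zero_mul]

lemma convSq_poissonCoeff_mul (hL : 1 ≤ L) {k : ℕ} (hk : 1 ≤ k) :
    convSq (poissonCoeff L r) (k * L) = ((k : ℝ) - 1) * r ^ k := by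
  have hsupp : ∀ j ∈ Finset.Ico 1 (k * L), j ∉ (Finset.Ico 1 k).image (· * L) →
      poissonCoeff L r j * poissonCoeff L r (k * L - j) = 0 := by
    intro j hj hj'
    refine mul_eq_zero_of_left (poissonCoeff_of_not_dvd ?_) _
    rintro ⟨m, rfl⟩
    rw [Finset.mem_Ico] at hj
    refine hj' (Finset.mem_image.2 ⟨m, Finset.mem_Ico.2 ⟨?_, ?_⟩, mul_comm m L⟩)
    · rcases m with _ | m <;> simp_all
    · by_contra hmk
      nlinarith [Nat.mul_le_mul_left L (not_lt.1 hmk)]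
  have hsub : (Finset.Ico 1 k).image (· * L) ⊆ Finset.Ico 1 (k * L) := by
    intro j hj
    obtain ⟨m, hm, rfl⟩ := Finset.mem_image.1 hj
    rw [Finset.mem_Ico] at hm ⊢
    exact ⟨Nat.one_le_iff_ne_zero.2 (Nat.mul_ne_zero (by omega) (by omega)),
      Nat.mul_lt_mul_of_pos_right hm.2 (by omega)⟩
  rw [convSq, ← Finset.sum_subset hsub hsupp,
    Finset.sum_image fun u _ v _ h => Nat.eq_of_mul_eq_mul_right (by omega) h]
  calc ∑ m ∈ Finset.Ico 1 k, poissonCoeff L r (m * L) * poissonCoeff L r (k * L - m * L)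
      = ∑ m ∈ Finset.Ico 1 k, r ^ k := by
        refine Finset.sum_congr rfl fun m hm => ?_
        rw [Finset.mem_Ico] at hm
        rw [← Nat.sub_mul, poissonCoeff_mul hL, poissonCoeff_mul hL, ← pow_add,
          Nat.add_sub_cancel' hm.2.le]
    _ = ((k : ℝ) - 1) * r ^ k := by
        rw [Finset.sum_const, Nat.card_Ico, nsmul_eq_mul, Nat.cast_sub hk, Nat.cast_one]

lemma poissonCoeff_recursion (hL : 1 ≤ L) {ℓ : ℕ} (hℓ : 1 ≤ ℓ) :
    (2 * (ℓ : ℝ) - 2 * L) * poissonCoeff L r ℓ = 2 * L * convSq (poissonCoeff L r) ℓ := by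
  by_cases hdvd : L ∣ ℓ
  · obtain ⟨k, rfl⟩ := hdvd
    have hk : 1 ≤ k := by rcases k with _ | k <;> simp_all
    rw [mul_comm L k, poissonCoeff_mul hL, convSq_poissonCoeff_mul hL hk]
    push_cast
    ring
  · rw [poissonCoeff_of_not_dvd hdvd, convSq_poissonCoeff_of_not_dvd hdvd, mul_zero, mul_zero]

lemma eq_poissonCoeff_of_recursion (hL : 1 ≤ L) {x : ℕ → ℝ}
    (hx : ∀ ℓ : ℕ, 1 ≤ ℓ → (2 * (ℓ : ℝ) - 2 * L) * x ℓ = 2 * L * convSq x ℓ) :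
    ∀ ℓ, 1 ≤ ℓ → x ℓ = poissonCoeff L (x L) ℓ := by
  intro ℓ
  induction ℓ using Nat.strong_induction_on with
  | _ ℓ ih =>
    intro hℓ
    by_cases hℓL : ℓ = L
    · subst hℓL
      simpa using (poissonCoeff_mul (r := x ℓ) hL 1).symm
    have hconv : convSq x ℓ = convSq (poissonCoeff L (x L)) ℓ :=
      convSq_congr fun j hj hjℓ => ih j hjℓ hj
    have hne : 2 * (ℓ : ℝ) - 2 * L ≠ 0 :=
      sub_ne_zero.2 (by exact_mod_cast (by omega : 2 * ℓ ≠ 2 * L))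
    apply mul_left_cancel₀ hne
    rw [hx ℓ hℓ, hconv, poissonCoeff_recursion hL hℓ]

end poissonCoeff

lemma solvesMV_inv_iff {a : ℕ → ℝ} (ha : ∀ ℓ : ℕ, 1 ≤ ℓ → a ℓ = 1 / (ℓ : ℝ)) (κ : ℝ)
    (x : ℕ → ℝ) :
    SolvesMV a κ x ↔ ∀ ℓ : ℕ, 1 ≤ ℓ → (2 * (ℓ : ℝ) - κ) * x ℓ = κ * convSq x ℓ := by
  have hmul : ∀ j : ℕ, 1 ≤ j → (j : ℝ) * a j = 1 := fun j hj => by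
    rw [ha j hj, mul_one_div_cancel (Nat.cast_ne_zero.2 (by omega))]
  have htail : ∀ ℓ : ℕ, 1 ≤ ℓ → (fun k : ℕ =>
      (((ℓ + k + 1 : ℕ) : ℝ) * a (ℓ + k + 1) - ((k + 1 : ℕ) : ℝ) * a (k + 1))
        * x (ℓ + k + 1) * x (k + 1)) = 0 := fun ℓ _ => by
    ext k
    rw [hmul _ (by omega), hmul _ (by omega)]
    simp
  have hlhs : ∀ ℓ : ℕ, 1 ≤ ℓ → (ℓ : ℝ) * (2 - κ * a ℓ) * x ℓ = (2 * ℓ - κ) * x ℓ := fun ℓ hℓ => by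
    linear_combination (-κ * x ℓ) * hmul ℓ hℓ
  have hconv : ∀ ℓ : ℕ, ∑ j ∈ Finset.Ico 1 ℓ, (j : ℝ) * a j * x j * x (ℓ - j) = convSq x ℓ :=
    fun ℓ => Finset.sum_congr rfl fun j hj => by
      rw [hmul j (Finset.mem_Ico.1 hj).1, one_mul]
  refine forall₂_congr fun ℓ hℓ => ?_
  rw [htail ℓ hℓ, hlhs ℓ hℓ, hconv, Pi.zero_def, tsum_zero, mul_zero, add_zero]
  exact and_iff_right summable_zero

lemma MemL2w.tendsto_atTop_zero {x : ℕ → ℝ} (hx : MemL2w x) : Tendsto x atTop (𝓝 0) := by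
  have hsq : Summable fun ℓ : ℕ => x (ℓ + 1) ^ 2 :=
    hx.of_nonneg_of_le (fun _ => sq_nonneg _) fun ℓ =>
      le_mul_of_one_le_left (sq_nonneg _) (le_add_of_nonneg_right (sq_nonneg _))
  have habs : Tendsto (fun ℓ => |x (ℓ + 1)|) atTop (𝓝 0) := by
    simpa [Real.sqrt_sq_eq_abs] using hsq.tendsto_atTop_zero.sqrt
  exact (tendsto_add_atTop_iff_nat 1).1 ((tendsto_zero_iff_abs_tendsto_zero _).2 habs)

lemma abs_lt_one_of_memL2w {x : ℕ → ℝ} (hx : MemL2w x) {L : ℕ} (hL : 1 ≤ L) {r : ℝ}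
    (hr : ∀ k : ℕ, 1 ≤ k → x (k * L) = r ^ k) : |r| < 1 := by
  have hsub : Tendsto (fun k => x (k * L)) atTop (𝓝 0) :=
    hx.tendsto_atTop_zero.comp (tendsto_id.atTop_mul_const' (by omega))
  refine tendsto_pow_atTop_nhds_zero_iff.1 (hsub.congr' ?_)
  filter_upwards [eventually_ge_atTop 1] with k hk using hr k hk

/-- for the log-sine potential (`a_ℓ = 1/ℓ`) and `κ = 2ℓ*`, the solutions of
the stationary Fourier system in `ℓ²_w` are exactly the Fourier coefficient sequences of the
Poisson kernels with wave number `ℓ*`: `x_{kℓ*} = r^k` (`k ≥ 1`) for some `r ∈ (−1,1)`, and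
`x_j = 0` when `ℓ* ∤ j`. -/
theorem logsine_poisson_kernels
    (a : ℕ → ℝ) (ha : ∀ ℓ : ℕ, 1 ≤ ℓ → a ℓ = 1 / (ℓ : ℝ))
    (lstar : ℕ) (hl : 1 ≤ lstar) :
    ∀ x : ℕ → ℝ, MemL2w x →
      (SolvesMV a (2 * (lstar : ℝ)) x ↔
        ∃ r : ℝ, -1 < r ∧ r < 1 ∧
          (∀ k : ℕ, 1 ≤ k → x (k * lstar) = r ^ k) ∧
          (∀ j : ℕ, 1 ≤ j → ¬ lstar ∣ j → x j = 0)) := by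
  intro x hx
  simp_rw [solvesMV_inv_iff ha, ← forall_eq_poissonCoeff_iff hl]
  constructor
  · intro h
    have hP := eq_poissonCoeff_of_recursion hl h
    have hr := abs_lt_one_of_memL2w hx hl ((forall_eq_poissonCoeff_iff hl x).1 hP).1
    exact ⟨x lstar, (abs_lt.1 hr).1, (abs_lt.1 hr).2, hP⟩
  · rintro ⟨r, -, -, hP⟩ ℓ hℓ
    rw [hP ℓ hℓ, convSq_congr fun j hj _ => hP j hj]
    exact poissonCoeff_recursion hl hℓ
end
end
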